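/- arXiv:math/0409011 — 6 statements merged into one kernel-verified Lean document; each statement's English description precedes it below -/
import Mathlib

section
/- Let h and k be complex Hilbert spaces and let φ : B(h) → B(k) be a *-isomorphism onto B(k), i.e., a bijective complex-linear map with φ(AB) = φ(A)φ(B) and φ(A*) = φ(A)* for all A, B ∈ B(h). Then φ is unitarily implemented: there exists a linear isometric bijection (unitary) U : k → h such that φ(A) x = U⁻¹ (A (U x)) for all A ∈ B(h) and all x ∈ k. -/
/-- Any *-isomorphism `φ` of `B(h)` onto `B(k)` is unitarily implemented: there is a
unitary `U : k → h` with `φ(A) x = U⁻¹ (A (U x))` for all `A ∈ B(h)`, `x ∈ k`. -/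
theorem stmt4 {h k : Type*}
    [NormedAddCommGroup h] [InnerProductSpace ℂ h] [CompleteSpace h]
    [NormedAddCommGroup k] [InnerProductSpace ℂ k] [CompleteSpace k]
    (φ : (h →L[ℂ] h) → (k →L[ℂ] k))
    (hbij : Function.Bijective φ)
    (hadd : ∀ A B, φ (A + B) = φ A + φ B)
    (hsmul : ∀ (c : ℂ) (A), φ (c • A) = c • φ A)
    (hmul : ∀ A B, φ (A * B) = φ A * φ B)
    (hstar : ∀ A, φ (star A) = star (φ A)) :
    ∃ U : k ≃ₗᵢ[ℂ] h, ∀ (A : h →L[ℂ] h) (x : k), φ A x = U.symm (A (U x)) := by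
  classical
  obtain ⟨hinj, hsurj⟩ := hbij
  have hφ0 : φ 0 = 0 := by
    have h1 := hadd 0 0
    rw [add_zero] at h1
    exact add_left_cancel (h1.symm.trans (add_zero (φ 0)).symm)
  by_cases hh : Subsingleton h
  · -- degenerate case: `h = 0`, hence `k = 0`
    haveI := hh
    haveI : Subsingleton (h →L[ℂ] h) :=
      ⟨fun a b => by ext x; exact Subsingleton.elim _ _⟩
    have hk0 : ∀ x : k, x = 0 := by
      intro x
      have h1 : (1 : k →L[ℂ] k) = 0 := by
        obtain ⟨a, ha⟩ := hsurj 1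
        obtain ⟨b, hb⟩ := hsurj 0
        rw [← ha, ← hb, Subsingleton.elim a b]
      calc x = (1 : k →L[ℂ] k) x := rfl
        _ = (0 : k →L[ℂ] k) x := by rw [h1]
        _ = 0 := rfl
    haveI : Subsingleton k := ⟨fun a b => by rw [hk0 a, hk0 b]⟩
    refine ⟨⟨LinearEquiv.ofSubsingleton k h, ?_⟩, ?_⟩
    · intro x; rw [Subsingleton.elim x 0]; simp
    · intro A x
      exact Subsingleton.elim _ _
  · haveI : Nontrivial h := not_subsingleton_iff_nontrivial.mp hh
    obtain ⟨e, he⟩ : ∃ e : h, ‖e‖ = 1 := exists_norm_eq h (by norm_num)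
    have hee : (inner ℂ e e : ℂ) = 1 := by
      rw [inner_self_eq_norm_sq_to_K, he]; norm_num
    set p : h →L[ℂ] h := (innerSL ℂ e).smulRight e with hp
    have hpapp : ∀ x, p x = (inner ℂ e x : ℂ) • e := fun x => by simp [hp]
    have hpstar : star p = p := by
      rw [ContinuousLinearMap.star_eq_adjoint]
      symm
      rw [ContinuousLinearMap.eq_adjoint_iff]
      intro x y
      simp only [hpapp, inner_smul_left, inner_smul_right, inner_conj_symm]
      ring
    have hpp : p * p = p := by
      ext x
      simp [ContinuousLinearMap.mul_apply, hpapp, inner_smul_right, hee, he]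
    set q : k →L[ℂ] k := φ p with hq
    have hq2 : q * q = q := by rw [hq, ← hmul, hpp]
    have hqstar : star q = q := by rw [hq, ← hstar, hpstar]
    have hqadj : ContinuousLinearMap.adjoint q = q := by
      rw [← ContinuousLinearMap.star_eq_adjoint, hqstar]
    have hqne : q ≠ 0 := by
      intro h0
      have hp0 : p = 0 := hinj (by rw [← hq, h0, hφ0])
      have := hpapp e
      rw [hp0, hee, one_smul] at this
      have he0 : e = 0 := this.symm
      rw [he0, norm_zero] at he
      norm_num at he
    obtain ⟨x0, hx0⟩ : ∃ x, q x ≠ 0 := by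
      by_contra h0
      push_neg at h0
      exact hqne (by ext x; exact h0 x)
    set f0 : k := q x0 with hf0
    have hqf0 : q f0 = f0 := by
      have := congrArg (fun T : k →L[ℂ] k => T x0) hq2
      simpa [ContinuousLinearMap.mul_apply] using this
    set f : k := ((‖f0‖ : ℂ))⁻¹ • f0 with hf
    have hqf : q f = f := by rw [hf, map_smul, hqf0]
    have hfn : ‖f‖ = 1 := by
      have hne : ‖f0‖ ≠ 0 := norm_ne_zero_iff.mpr hx0
      rw [hf, norm_smul]
      simp [hne]
    have hff : (inner ℂ f f : ℂ) = 1 := by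
      rw [inner_self_eq_norm_sq_to_K, hfn]; norm_num
    -- if two operators agree at `e`, their images agree at `f`
    have heq : ∀ a b : h →L[ℂ] h, a e = b e → φ a f = φ b f := by
      intro a b hab
      have h1 : a * p = b * p := by
        ext x
        simp [ContinuousLinearMap.mul_apply, hpapp, map_smul, hab]
      have h2 : φ a * q = φ b * q := by rw [hq, ← hmul, ← hmul, h1]
      have h3 := congrArg (fun T : k →L[ℂ] k => T f) h2
      simpa [ContinuousLinearMap.mul_apply, hqf] using h3
    -- the key norm identity: ‖φ a f‖ = ‖a e‖
    have hnorm : ∀ a : h →L[ℂ] h, ‖φ a f‖ = ‖a e‖ := by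
      intro a
      have h1 : p * (star a * (a * p)) = ((‖a e‖ : ℂ) ^ 2) • p := by
        ext x
        simp only [ContinuousLinearMap.mul_apply, ContinuousLinearMap.smul_apply, hpapp,
          map_smul, ContinuousLinearMap.star_eq_adjoint, inner_smul_right,
          ContinuousLinearMap.adjoint_inner_right, inner_self_eq_norm_sq_to_K]
        rw [mul_comm, mul_smul]
        norm_num
      have h2 : q * (star (φ a) * (φ a * q)) = ((‖a e‖ : ℂ) ^ 2) • q := by
        rw [hq, ← hstar, ← hmul, ← hmul, ← hmul, h1, hsmul]
      have h3 := congrArg (fun T : k →L[ℂ] k => (inner ℂ f (T f) : ℂ)) h2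
      simp only [ContinuousLinearMap.mul_apply, ContinuousLinearMap.smul_apply, hqf,
        inner_smul_right] at h3
      rw [← hqadj, ContinuousLinearMap.adjoint_inner_right, hqf,
        ContinuousLinearMap.star_eq_adjoint, ContinuousLinearMap.adjoint_inner_right,
        inner_self_eq_norm_sq_to_K, hff, mul_one] at h3
      norm_cast at h3
      have h4 : ‖φ a f‖ ^ 2 = ‖a e‖ ^ 2 := Complex.ofReal_inj.mp h3
      have := congrArg Real.sqrt h4
      rwa [Real.sqrt_sq (norm_nonneg _), Real.sqrt_sq (norm_nonneg _)] at this
    -- the intertwining map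
    set V : h → k := fun y => φ ((innerSL ℂ e).smulRight y) f with hV
    have hsr : ∀ y : h, ((innerSL ℂ e).smulRight y) e = y := by
      intro y; simp [hee, he]
    have hVadd : ∀ y z, V (y + z) = V y + V z := by
      intro y z
      have : (innerSL ℂ e).smulRight (y + z)
          = (innerSL ℂ e).smulRight y + (innerSL ℂ e).smulRight z := by
        ext x; simp [smul_add]
      simp only [hV, this, hadd, ContinuousLinearMap.add_apply]
    have hVsmul : ∀ (c : ℂ) y, V (c • y) = c • V y := by
      intro c y
      have : (innerSL ℂ e).smulRight (c • y) = c • (innerSL ℂ e).smulRight y := by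
        ext x
        simp only [ContinuousLinearMap.smulRight_apply, ContinuousLinearMap.smul_apply]
        rw [smul_comm]
      simp only [hV, this, hsmul, ContinuousLinearMap.smul_apply]
    have hVnorm : ∀ y, ‖V y‖ = ‖y‖ := by
      intro y
      rw [hV]
      simp only
      rw [hnorm, hsr]
    have hVsurj : Function.Surjective V := by
      intro x
      obtain ⟨a, ha⟩ := hsurj ((innerSL ℂ f).smulRight x)
      refine ⟨a e, ?_⟩
      rw [hV]
      simp only
      rw [heq ((innerSL ℂ e).smulRight (a e)) a (hsr (a e)), ha,
        ContinuousLinearMap.smulRight_apply, innerSL_apply_apply, hff, one_smul]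
    let W : h →ₗ[ℂ] k :=
      { toFun := V, map_add' := hVadd, map_smul' := hVsmul }
    have hWinj : Function.Injective W := by
      intro y z hyz
      have h0 : W (y - z) = 0 := by rw [map_sub, hyz, sub_self]
      have h1 : ‖y - z‖ = 0 := by
        rw [← hVnorm (y - z)]
        exact norm_eq_zero.mpr h0
      have := norm_eq_zero.mp h1
      exact sub_eq_zero.mp this
    let Viso : h ≃ₗᵢ[ℂ] k := ⟨LinearEquiv.ofBijective W ⟨hWinj, hVsurj⟩, hVnorm⟩
    refine ⟨Viso.symm, ?_⟩
    intro A x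
    have hxy : Viso (Viso.symm x) = x := Viso.apply_symm_apply x
    set y : h := Viso.symm x with hy
    -- goal : φ A x = Viso (A y)
    have hVy : V y = x := hxy
    have key : Viso (A y) = φ A x := by
      have h1 : Viso (A y) = φ ((innerSL ℂ e).smulRight (A y)) f := rfl
      have h2 : φ ((innerSL ℂ e).smulRight (A y)) f
          = φ (A * (innerSL ℂ e).smulRight y) f := by
        apply heq
        rw [hsr, ContinuousLinearMap.mul_apply, hsr]
      rw [h1, h2, hmul, ContinuousLinearMap.mul_apply]
      congr 1
    simp only [LinearIsometryEquiv.symm_symm]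
    exact key.symm
end

section
/- Let h and k be complex Hilbert spaces and let φ : B(h) → B(k) be a *-antiisomorphism onto B(k), i.e., a bijective complex-linear map with φ(AB) = φ(B)φ(A) and φ(A*) = φ(A)* for all A, B ∈ B(h). Then φ is antiunitarily implemented: there exists a conjugate-linear isometric bijection (antiunitary) W : k → h such that φ(A) x = W⁻¹ (A* (W x)) for all A ∈ B(h) and all x ∈ k. -/
open ContinuousLinearMap
open scoped InnerProductSpace

set_option linter.unusedSectionVars false

section aux
variable {E : Type*} [NormedAddCommGroup E] [InnerProductSpace ℂ E] [CompleteSpace E]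

/-- rank one operator `u ↦ ⟪b, u⟫ • a`. -/
noncomputable def rk1 (a b : E) : E →L[ℂ] E := (innerSL ℂ b).smulRight a

lemma rk1_apply (a b u : E) : rk1 a b u = ⟪b, u⟫_ℂ • a := rfl

lemma rk1_star (a b : E) : star (rk1 a b) = rk1 b a := by
  rw [star_eq_adjoint]
  symm
  rw [ContinuousLinearMap.eq_adjoint_iff]
  intro x y
  simp only [rk1_apply, inner_smul_left, inner_smul_right, inner_conj_symm]
  ring

lemma rk1_mul (a b c d : E) : rk1 a b * rk1 c d = ⟪b, c⟫_ℂ • rk1 a d := by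
  ext u
  simp only [mul_apply_eq_comp, rk1_apply, inner_smul_right, smul_apply, smul_smul]
  ring_nf

lemma rk1_comp (A : E →L[ℂ] E) (a b : E) : A * rk1 a b = rk1 (A a) b := by
  ext u
  simp [mul_apply, rk1_apply]

lemma rk1_add (a a' b : E) : rk1 (a + a') b = rk1 a b + rk1 a' b := by
  ext u
  simp [rk1_apply, smul_add]

lemma rk1_smulL (c : ℂ) (a b : E) : rk1 (c • a) b = c • rk1 a b := by
  ext u
  simp [rk1_apply, smul_smul]
  ring_nf

end aux

/-- Any *-antiisomorphism `φ` of `B(h)` onto `B(k)` is antiunitarily implemented: there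
is an antiunitary (conjugate-linear isometric bijection) `W : k → h` with
`φ(A) x = W⁻¹ (A* (W x))` for all `A ∈ B(h)`, `x ∈ k`. -/
theorem stmt5 {h k : Type*}
    [NormedAddCommGroup h] [InnerProductSpace ℂ h] [CompleteSpace h]
    [NormedAddCommGroup k] [InnerProductSpace ℂ k] [CompleteSpace k]
    (φ : (h →L[ℂ] h) → (k →L[ℂ] k))
    (hbij : Function.Bijective φ)
    (hadd : ∀ A B, φ (A + B) = φ A + φ B)
    (hsmul : ∀ (c : ℂ) (A), φ (c • A) = c • φ A)
    (hmul : ∀ A B, φ (A * B) = φ B * φ A)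
    (hstar : ∀ A, φ (star A) = star (φ A)) :
    ∃ W : k ≃ₛₗᵢ[starRingEnd ℂ] h,
      ∀ (A : h →L[ℂ] h) (x : k), φ A x = W.symm ((star A) (W x)) := by
  by_cases hne : ∃ v : h, v ≠ 0
  · obtain ⟨v₀, hv₀⟩ := hne
    -- the `ψ` map: conjugate-linear *-isomorphism
    set ψ : (h →L[ℂ] h) → (k →L[ℂ] k) := fun A => star (φ A) with hψdef
    have hφ0 : φ 0 = 0 := by
      have := hsmul 0 0
      simpa using this
    have ψadd : ∀ A B, ψ (A + B) = ψ A + ψ B := by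
      intro A B; simp [hψdef, hadd, star_add]
    have ψsmul : ∀ (c : ℂ) A, ψ (c • A) = (starRingEnd ℂ c) • ψ A := by
      intro c A; simp [hψdef, hsmul, star_smul]
    have ψmul : ∀ A B, ψ (A * B) = ψ A * ψ B := by
      intro A B; simp [hψdef, hmul, star_mul]
    have ψstar : ∀ A, ψ (star A) = φ A := by
      intro A; simp [hψdef, hstar]
    have ψ0 : ψ 0 = 0 := by simp [hψdef, hφ0]
    have ψinj : Function.Injective ψ := by
      intro A B hAB
      apply hbij.injective
      have := congrArg star hAB
      simpa [hψdef] using this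
    have ψsurj : Function.Surjective ψ := by
      intro B
      obtain ⟨A, hA⟩ := hbij.surjective (star B)
      exact ⟨A, by simp [hψdef, hA]⟩
    have hψadjoint : ∀ A, star (ψ A) = ψ (star A) := by
      intro A; simp [hψdef, hstar]
    -- unit vector ξ
    set ξ : h := ((‖v₀‖ : ℂ))⁻¹ • v₀ with hξdef
    have hv₀' : (‖v₀‖ : ℝ) ≠ 0 := norm_ne_zero_iff.mpr hv₀
    have hξ : ‖ξ‖ = 1 := by
      rw [hξdef, norm_smul, norm_inv]
      simp [abs_of_nonneg (norm_nonneg v₀), inv_mul_cancel₀ hv₀']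
    have hξ0 : ξ ≠ 0 := by
      intro hc; rw [hc] at hξ; simp at hξ
    have hξinner : ⟪ξ, ξ⟫_ℂ = 1 := by
      rw [inner_self_eq_norm_sq_to_K, hξ]; norm_num
    -- projection p and its image q
    have hpp : rk1 ξ ξ * rk1 ξ ξ = rk1 (E := h) ξ ξ := by
      rw [rk1_mul, hξinner, one_smul]
    have hpne : rk1 (E := h) ξ ξ ≠ 0 := by
      intro hc
      apply hξ0
      have : rk1 ξ ξ ξ = (0 : h →L[ℂ] h) ξ := by rw [hc]
      simpa [rk1_apply, hξinner] using this
    have hqne : ψ (rk1 ξ ξ) ≠ 0 := by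
      intro hc
      exact hpne (ψinj (by rw [hc, ψ0]))
    obtain ⟨y, hy⟩ : ∃ y, ψ (rk1 ξ ξ) y ≠ 0 := by
      by_contra hc
      push_neg at hc
      exact hqne (by ext u; simp [hc u])
    set η : k := ((‖ψ (rk1 ξ ξ) y‖ : ℂ))⁻¹ • (ψ (rk1 ξ ξ) y) with hηdef
    have hqy : ψ (rk1 ξ ξ) (ψ (rk1 ξ ξ) y) = ψ (rk1 ξ ξ) y := by
      calc ψ (rk1 ξ ξ) (ψ (rk1 ξ ξ) y) = (ψ (rk1 ξ ξ) * ψ (rk1 ξ ξ)) y := rfl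
        _ = ψ (rk1 ξ ξ * rk1 ξ ξ) y := by rw [ψmul]
        _ = ψ (rk1 ξ ξ) y := by rw [hpp]
    have hqη : ψ (rk1 ξ ξ) η = η := by
      rw [hηdef, map_smul, hqy]
    have hy' : (‖ψ (rk1 ξ ξ) y‖ : ℝ) ≠ 0 := norm_ne_zero_iff.mpr hy
    have hηnorm : ‖η‖ = 1 := by
      rw [hηdef, norm_smul, norm_inv]
      simp [abs_of_nonneg (norm_nonneg _), inv_mul_cancel₀ hy']
    have hηinner : ⟪η, η⟫_ℂ = 1 := by
      rw [inner_self_eq_norm_sq_to_K, hηnorm]; norm_num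
    -- the map T
    set T : h → k := fun v => ψ (rk1 v ξ) η with hTdef
    have hTv : ∀ v, T v = ψ (rk1 v ξ) η := fun _ => rfl
    -- inner products are preserved (conjugated on the diagonal it's the same)
    have hTinner : ∀ v, ⟪T v, T v⟫_ℂ = ⟪v, v⟫_ℂ := by
      intro v
      have h1 : ⟪T v, T v⟫_ℂ = ⟪η, (ContinuousLinearMap.adjoint (ψ (rk1 v ξ))) (ψ (rk1 v ξ) η)⟫_ℂ := by
        rw [ContinuousLinearMap.adjoint_inner_right]
      rw [hTv, h1, ← star_eq_adjoint, hψadjoint, rk1_star]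
      have h2 : ψ (rk1 ξ v) (ψ (rk1 v ξ) η) = (ψ (rk1 ξ v) * ψ (rk1 v ξ)) η := rfl
      rw [h2, ← ψmul, rk1_mul, ψsmul]
      have h3 : (starRingEnd ℂ) ⟪v, v⟫_ℂ = ⟪v, v⟫_ℂ := inner_conj_symm v v
      rw [h3]
      simp only [smul_apply, inner_smul_right, hqη, hηinner, mul_one]
    have hTnorm : ∀ v, ‖T v‖ = ‖v‖ := by
      intro v
      have := hTinner v
      rw [inner_self_eq_norm_sq_to_K, inner_self_eq_norm_sq_to_K] at this
      have h2 : (‖T v‖ : ℝ)^2 = ‖v‖^2 := by exact_mod_cast this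
      calc ‖T v‖ = Real.sqrt (‖T v‖^2) := (Real.sqrt_sq (norm_nonneg _)).symm
        _ = Real.sqrt (‖v‖^2) := by rw [h2]
        _ = ‖v‖ := Real.sqrt_sq (norm_nonneg _)
    -- semilinearity
    have hTadd : ∀ v w, T (v + w) = T v + T w := by
      intro v w
      rw [hTv, hTv, hTv, rk1_add, ψadd]
      simp
    have hTsmul : ∀ (c : ℂ) v, T (c • v) = (starRingEnd ℂ c) • T v := by
      intro c v
      rw [hTv, hTv, rk1_smulL, ψsmul]
      simp
    -- intertwining
    have hTint : ∀ (B : h →L[ℂ] h) w, ψ B (T w) = T (B w) := by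
      intro B w
      rw [hTv, hTv, ← rk1_comp, ψmul]
      rfl
    -- surjectivity
    have hTsurj : Function.Surjective T := by
      intro x
      obtain ⟨A, hA⟩ := ψsurj (rk1 x η)
      refine ⟨A ξ, ?_⟩
      calc T (A ξ) = ψ (A * rk1 ξ ξ) η := by rw [hTv, rk1_comp]
        _ = ψ A (ψ (rk1 ξ ξ) η) := by rw [ψmul]; rfl
        _ = ψ A η := by rw [hqη]
        _ = rk1 x η η := by rw [hA]
        _ = x := by rw [rk1_apply, hηinner, one_smul]
    -- assemble
    let Tlin : h →ₛₗ[starRingEnd ℂ] k :=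
      { toFun := T
        map_add' := hTadd
        map_smul' := hTsmul }
    have hTinj : Function.Injective Tlin := by
      intro a b hab
      have h0 : Tlin (a - b) = 0 := by rw [map_sub, hab, sub_self]
      have h1 : ‖T (a - b)‖ = 0 := by
        rw [show T (a - b) = Tlin (a - b) from rfl, h0, norm_zero]
      rw [hTnorm] at h1
      exact sub_eq_zero.mp (norm_eq_zero.mp h1)
    let Te : h ≃ₛₗ[starRingEnd ℂ] k := LinearEquiv.ofBijective Tlin ⟨hTinj, hTsurj⟩
    let Tiso : h ≃ₛₗᵢ[starRingEnd ℂ] k := ⟨Te, fun v => hTnorm v⟩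
    refine ⟨Tiso.symm, ?_⟩
    intro A x
    rw [LinearIsometryEquiv.symm_symm]
    have h1 : φ A x = ψ (star A) x := by rw [ψstar]
    have h2 : Tiso ((star A) (Tiso.symm x)) = T ((star A) (Tiso.symm x)) := rfl
    have h3 : T (Tiso.symm x) = Tiso (Tiso.symm x) := rfl
    rw [h1, h2, ← hTint (star A) (Tiso.symm x), h3, Tiso.apply_symm_apply]
  · -- degenerate case
    push_neg at hne
    have hsubh : Subsingleton h := ⟨fun a b => by rw [hne a, hne b]⟩
    have hBk : Subsingleton (k →L[ℂ] k) := by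
      constructor
      intro A B
      obtain ⟨A', rfl⟩ := hbij.surjective A
      obtain ⟨B', rfl⟩ := hbij.surjective B
      have : A' = B' := by ext u; simp [hne (A' u), hne (B' u)]
      rw [this]
    have hk0 : ∀ x : k, x = 0 := by
      intro x
      have h1 : (1 : k →L[ℂ] k) = 0 := Subsingleton.elim _ _
      calc x = (1 : k →L[ℂ] k) x := rfl
        _ = (0 : k →L[ℂ] k) x := by rw [h1]
        _ = 0 := rfl
    have hsubk : Subsingleton k := ⟨fun a b => by rw [hk0 a, hk0 b]⟩
    have e : k ≃ₛₗ[starRingEnd ℂ] h :=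
      { toFun := fun _ => (0 : h)
        invFun := fun _ => (0 : k)
        map_add' := fun a b => by simp
        map_smul' := fun c a => by simp
        left_inv := fun x => Subsingleton.elim _ _
        right_inv := fun x => Subsingleton.elim _ _ }
    refine ⟨⟨e, fun x => ?_⟩, fun A x => Subsingleton.elim _ _⟩
    rw [Subsingleton.elim (e x) 0, Subsingleton.elim x (0 : k)]
    simp
end

section
/- Let A and B be unital C*-algebras and let φ : A → B be a Jordan *-isomorphism of A onto B. Then the map Φ : ω ↦ ω ∘ φ maps the set of pure states of B bijectively onto the set of pure states of A, satisfies ‖Φ(ω₀) − Φ(ω₁)‖ = ‖ω₀ − ω₁‖ for all pure states ω₀, ω₁ of B (in particular Φ is bi-orthogonal: ω₀ and ω₁ are orthogonal if and only if Φ(ω₀) and Φ(ω₁) are orthogonal), and both Φ and its inverse are uniformly continuous with respect to the weak* topologies (i.e., the σ(B*, B)- and σ(A*, A)-uniformities on the duals). -/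
set_option linter.unusedSectionVars false
set_option maxHeartbeats 1000000

open Complex

section JordanAlg
variable {A B : Type*} [Ring A] [Ring B] [Algebra ℂ A] [Algebra ℂ B]
variable (φ : A →ₗ[ℂ] B)

lemma jordan_sq (hj : ∀ a b, φ (a * b + b * a) = φ a * φ b + φ b * φ a) (a : A) :
    φ (a * a) = φ a * φ a := by
  have h2 : (2:ℂ) • φ (a * a) = (2:ℂ) • (φ a * φ a) := by
    rw [two_smul, two_smul, ← map_add]
    simpa using hj a a
  have := congrArg (fun x => (2:ℂ)⁻¹ • x) h2
  simpa [smul_smul] using this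

lemma jordan_one (hsurj : Function.Surjective φ)
    (hj : ∀ a b, φ (a * b + b * a) = φ a * φ b + φ b * φ a) : φ 1 = 1 := by
  obtain ⟨a, ha⟩ := hsurj 1
  have h := hj 1 a
  rw [ha] at h
  simp only [one_mul, mul_one] at h
  rw [map_add, ha] at h
  have h2 : (2:ℂ) • (1 : B) = (2:ℂ) • φ 1 := by
    rw [two_smul, two_smul]; exact h
  have := congrArg (fun x => (2:ℂ)⁻¹ • x) h2
  simpa [smul_smul] using this.symm

lemma jordan_triple (hj : ∀ a b, φ (a * b + b * a) = φ a * φ b + φ b * φ a) (a b : A) :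
    φ (a * b * a) = φ a * φ b * φ a := by
  have H1 := hj a (a * b + b * a)
  rw [hj a b] at H1
  have hLHS : a * (a * b + b * a) + (a * b + b * a) * a
      = (a * a * b + b * (a * a)) + (a * b * a + a * b * a) := by noncomm_ring
  rw [hLHS, map_add, map_add, map_add] at H1
  have hj2 : φ (a * a * b) + φ (b * (a * a)) = φ (a*a) * φ b + φ b * φ (a*a) := by
    rw [← map_add]; exact hj (a*a) b
  rw [hj2, jordan_sq φ hj] at H1
  have hRHS : φ a * (φ a * φ b + φ b * φ a) + (φ a * φ b + φ b * φ a) * φ a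
      = (φ a * φ a * φ b + φ b * (φ a * φ a)) + (φ a * φ b * φ a + φ a * φ b * φ a) := by
    noncomm_ring
  rw [hRHS] at H1
  have h2 : (2:ℂ) • φ (a * b * a) = (2:ℂ) • (φ a * φ b * φ a) := by
    rw [two_smul, two_smul]
    exact add_left_cancel H1
  have := congrArg (fun x => (2:ℂ)⁻¹ • x) h2
  simpa [smul_smul] using this

lemma jordan_isUnit (hsurj : Function.Surjective φ)
    (hj : ∀ a b, φ (a * b + b * a) = φ a * φ b + φ b * φ a) {a : A} (ha : IsUnit a) :
    IsUnit (φ a) := by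
  obtain ⟨u, rfl⟩ := ha
  have key : φ (u : A) * φ ((↑u⁻¹ : A) * (↑u⁻¹ : A)) * φ (u : A) = 1 := by
    rw [← jordan_triple φ hj]
    have : (u : A) * ((↑u⁻¹ : A) * (↑u⁻¹ : A)) * (u : A) = 1 := by
      calc (u : A) * ((↑u⁻¹ : A) * (↑u⁻¹ : A)) * (u : A)
          = ((u : A) * (↑u⁻¹ : A)) * ((↑u⁻¹ : A) * (u : A)) := by noncomm_ring
        _ = 1 := by rw [Units.mul_inv, Units.inv_mul, one_mul]
    rw [this, jordan_one φ hsurj hj]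
  set x := φ (u : A)
  set y := φ ((↑u⁻¹ : A) * (↑u⁻¹ : A))
  have hxy : x * (y * x) = 1 := by rw [← mul_assoc]; exact key
  have hcomm : x * y = y * x := by
    calc x * y = (x * y) * (x * (y * x)) := by rw [hxy, mul_one]
      _ = (x * y * x) * (y * x) := by noncomm_ring
      _ = y * x := by rw [key, one_mul]
  exact ⟨⟨x, y * x, hxy, by rw [← hcomm, mul_assoc, hxy]⟩, rfl⟩

lemma jordan_spectrum_subset (hsurj : Function.Surjective φ)
    (hj : ∀ a b, φ (a * b + b * a) = φ a * φ b + φ b * φ a) (a : A) :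
    spectrum ℂ (φ a) ⊆ spectrum ℂ a := by
  intro z hz
  rw [spectrum.mem_iff] at hz ⊢
  intro hu
  exact hz (by
    have : φ (algebraMap ℂ A z - a) = algebraMap ℂ B z - φ a := by
      rw [map_sub, Algebra.algebraMap_eq_smul_one, Algebra.algebraMap_eq_smul_one,
        map_smul, jordan_one φ hsurj hj]
    rw [← this]
    exact jordan_isUnit φ hsurj hj hu)

end JordanAlg

section CStar
variable {A : Type*}
  [NormedRing A] [StarRing A] [CStarRing A] [NormedAlgebra ℂ A] [CompleteSpace A] [StarModule ℂ A]

lemma norm_one_le_cstar : ‖(1:A)‖ ≤ 1 := by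
  rcases subsingleton_or_nontrivial A with hs | hs
  · simp [Subsingleton.elim (1:A) 0]
  · exact le_of_eq CStarRing.norm_one

/-- Decomposition into self-adjoint parts. -/
lemma sa_decomp (a : A) : ∃ h k : A, IsSelfAdjoint h ∧ IsSelfAdjoint k ∧
    a = h + I • k ∧ ‖h‖ ≤ ‖a‖ ∧ ‖k‖ ≤ ‖a‖ := by
  refine ⟨(2:ℂ)⁻¹ • (a + star a), (2:ℂ)⁻¹ • (I • (star a - a)), ?_, ?_, ?_, ?_, ?_⟩
  · rw [IsSelfAdjoint, star_smul, star_add, star_star]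
    simp [add_comm]
  · rw [IsSelfAdjoint, star_smul, star_smul, star_sub, star_star]
    simp only [RCLike.star_def, map_inv₀, Complex.conj_ofNat, conj_I]
    rw [← neg_sub a (star a), smul_neg, smul_neg, neg_smul, smul_neg]
  · rw [smul_smul, smul_smul]
    rw [show I * (2:ℂ)⁻¹ * I = -(2:ℂ)⁻¹ by
      rw [mul_comm I, mul_assoc, I_mul_I]; ring]
    rw [smul_add, neg_smul, smul_sub]
    rw [show (2:ℂ)⁻¹ • a + (2:ℂ)⁻¹ • star a + -((2:ℂ)⁻¹ • star a - (2:ℂ)⁻¹ • a)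
        = (2:ℂ)⁻¹ • a + (2:ℂ)⁻¹ • a by abel, ← add_smul]
    norm_num
  · calc ‖(2:ℂ)⁻¹ • (a + star a)‖ = 2⁻¹ * ‖a + star a‖ := by
          rw [norm_smul]; norm_num
      _ ≤ 2⁻¹ * (‖a‖ + ‖star a‖) := by gcongr; exact norm_add_le _ _
      _ = ‖a‖ := by rw [norm_star]; ring
  · calc ‖(2:ℂ)⁻¹ • (I • (star a - a))‖ = 2⁻¹ * ‖star a - a‖ := by
          rw [norm_smul, norm_smul]; simp
      _ ≤ 2⁻¹ * (‖star a‖ + ‖a‖) := by gcongr; exact norm_sub_le _ _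
      _ = ‖a‖ := by rw [norm_star]; ring

/-- A norm-one unital functional is real on self-adjoint elements. -/
lemma state_im_eq_zero (ω : A →L[ℂ] ℂ) (h1 : ω 1 = 1) (hn : ‖ω‖ = 1)
    {a : A} (ha : IsSelfAdjoint a) : (ω a).im = 0 := by
  have key : ∀ t : ℝ, ((ω a).im + t)^2 ≤ ‖a‖^2 + t^2 := by
    intro t
    set x := a + ((t : ℂ) * I) • 1 with hx
    have hsx : star x = a - ((t : ℂ) * I) • 1 := by
      rw [hx, star_add, ha.star_eq, star_smul, star_one]
      simp [sub_eq_add_neg]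
    have hgen : ∀ s : ℂ, (a - s • 1) * (a + s • 1) = a * a - (s * s) • 1 := by
      intro s
      simp only [sub_mul, mul_add, smul_mul_assoc, mul_smul_comm, one_mul, mul_one]
      module
    have hxx : star x * x = a * a + (((t:ℝ)^2 : ℂ)) • 1 := by
      rw [hsx, hx, hgen]
      rw [show ((t:ℂ) * I) * ((t:ℂ) * I) = -(((t:ℝ)^2 : ℂ)) by
        rw [mul_mul_mul_comm, I_mul_I]; push_cast; ring]
      rw [neg_smul, sub_neg_eq_add]
    have hb2 : ‖(((t:ℝ)^2 : ℂ)) • (1:A)‖ ≤ t^2 := by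
      rw [norm_smul]
      calc ‖(((t:ℝ)^2 : ℂ))‖ * ‖(1:A)‖ ≤ ‖(((t:ℝ)^2 : ℂ))‖ * 1 := by
            gcongr; exact norm_one_le_cstar
        _ = t^2 := by rw [mul_one, norm_pow, Complex.norm_real, Real.norm_eq_abs, _root_.sq_abs]
    have hnx : ‖x‖^2 ≤ ‖a‖^2 + t^2 := by
      have hcs := CStarRing.norm_star_mul_self (x := x)
      rw [hxx] at hcs
      have : ‖x‖ * ‖x‖ ≤ ‖a‖^2 + t^2 := by
        rw [← hcs]
        calc ‖a * a + (((t:ℝ)^2 : ℂ)) • (1:A)‖ ≤ ‖a * a‖ + ‖(((t:ℝ)^2 : ℂ)) • (1:A)‖ :=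
              norm_add_le _ _
          _ ≤ ‖a‖ * ‖a‖ + t^2 := add_le_add (norm_mul_le _ _) hb2
          _ = ‖a‖^2 + t^2 := by ring
      nlinarith [this]
    have hωx : ω x = ω a + (t:ℂ) * I := by
      rw [hx, map_add, map_smul, h1, smul_eq_mul, mul_one]
    have habs : ‖ω x‖ ≤ ‖x‖ := by
      calc ‖ω x‖ = ‖ω x‖ := rfl
        _ ≤ ‖ω‖ * ‖x‖ := ω.le_opNorm x
        _ = ‖x‖ := by rw [hn, one_mul]
    have habs2 : (‖ω a + (t:ℂ) * I‖)^2 ≤ ‖a‖^2 + t^2 := by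
      rw [← hωx]
      calc (‖ω x‖)^2 ≤ ‖x‖^2 := pow_le_pow_left₀ (norm_nonneg _) habs 2
        _ ≤ ‖a‖^2 + t^2 := hnx
    rw [Complex.sq_norm, Complex.normSq_apply] at habs2
    simp only [add_re, add_im, mul_re, mul_im, ofReal_re, ofReal_im, I_re, I_im] at habs2
    nlinarith [habs2, sq_nonneg ((ω a).re)]
  by_contra hβ
  set β := (ω a).im with hβdef
  have expand : ∀ t : ℝ, β^2 + 2*β*t ≤ ‖a‖^2 := by
    intro t; nlinarith [key t]
  have h2 := expand ((‖a‖^2 + 1 - β^2)/(2*β))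
  have hc : 2*β*((‖a‖^2 + 1 - β^2)/(2*β)) = ‖a‖^2 + 1 - β^2 := by
    field_simp
  rw [hc] at h2
  linarith

end CStar

section CStar2
variable {A : Type*}
  [NormedRing A] [StarRing A] [CStarRing A] [NormedAlgebra ℂ A] [CompleteSpace A] [StarModule ℂ A]

lemma state_hermitian' (ω : A →L[ℂ] ℂ)
    (him : ∀ {x : A}, IsSelfAdjoint x → (ω x).im = 0) (a : A) :
    ω (star a) = (starRingEnd ℂ) (ω a) := by
  obtain ⟨h, k, hh, hk, hdec, -, -⟩ := sa_decomp a
  have hstar_a : star a = h - I • k := by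
    rw [hdec, star_add, hh.star_eq, star_smul, hk.star_eq]
    simp only [RCLike.star_def, conj_I, neg_smul]
    rw [sub_eq_add_neg]
  have hωh : (starRingEnd ℂ) (ω h) = ω h := Complex.conj_eq_iff_im.mpr (him hh)
  have hωk : (starRingEnd ℂ) (ω k) = ω k := Complex.conj_eq_iff_im.mpr (him hk)
  rw [hstar_a, hdec, map_sub, map_add, map_smul]
  simp only [smul_eq_mul, map_add, map_mul, Complex.conj_I]
  rw [hωh, hωk]
  ring

lemma herm_norm_le_of_sa (f : A →L[ℂ] ℂ) (hf : ∀ a, f (star a) = (starRingEnd ℂ) (f a))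
    (M : ℝ) (hM : 0 ≤ M) (hb : ∀ h : A, IsSelfAdjoint h → ‖f h‖ ≤ M * ‖h‖) : ‖f‖ ≤ M := by
  refine f.opNorm_le_bound hM fun a => ?_
  rcases eq_or_ne (f a) 0 with hz | hz
  · rw [hz, norm_zero]; positivity
  set c : ℂ := (‖f a‖ : ℂ) / f a with hcdef
  have hnfa : ‖((‖f a‖ : ℝ) : ℂ)‖ = ‖f a‖ := by
    rw [Complex.norm_real, norm_norm]
  have hc : ‖c‖ = 1 := by
    rw [hcdef, norm_div, hnfa, div_self (norm_ne_zero_iff.mpr hz)]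
  have hca : c * f a = (‖f a‖ : ℂ) := div_mul_cancel₀ _ hz
  set h : A := (2:ℂ)⁻¹ • (c • a + star (c • a)) with hhdef
  have hsa : IsSelfAdjoint h := by
    rw [IsSelfAdjoint, hhdef, star_smul, star_add, star_star]
    simp [add_comm]
  have hfh : f h = ((‖f a‖ : ℝ) : ℂ) := by
    rw [hhdef, map_smul, map_add, hf (c • a), map_smul]
    simp only [smul_eq_mul]
    rw [hca, Complex.conj_ofReal]
    ring
  have hnh : ‖h‖ ≤ ‖a‖ := by
    calc ‖h‖ = 2⁻¹ * ‖c • a + star (c • a)‖ := by rw [hhdef, norm_smul]; norm_num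
      _ ≤ 2⁻¹ * (‖c • a‖ + ‖star (c • a)‖) := by gcongr; exact norm_add_le _ _
      _ = ‖c • a‖ := by rw [norm_star]; ring
      _ = ‖a‖ := by rw [norm_smul, hc, one_mul]
  calc ‖f a‖ = ‖f h‖ := by rw [hfh, hnfa]
    _ ≤ M * ‖h‖ := hb h hsa
    _ ≤ M * ‖a‖ := by gcongr

end CStar2

section JordanNorm
variable {A B : Type*}
  [NormedRing A] [StarRing A] [CStarRing A] [NormedAlgebra ℂ A] [CompleteSpace A] [StarModule ℂ A]
  [NormedRing B] [StarRing B] [CStarRing B] [NormedAlgebra ℂ B] [CompleteSpace B] [StarModule ℂ B]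

lemma jordan_norm_sa_le (φ : A →ₗ[ℂ] B) (hsurj : Function.Surjective φ)
    (hstar : ∀ a, φ (star a) = star (φ a))
    (hj : ∀ a b, φ (a * b + b * a) = φ a * φ b + φ b * φ a)
    {h : A} (hh : IsSelfAdjoint h) : ‖φ h‖ ≤ ‖h‖ := by
  letI : CStarAlgebra A := { }
  letI : CStarAlgebra B := { }
  have hsa : IsSelfAdjoint (φ h) := by rw [IsSelfAdjoint, ← hstar, hh.star_eq]
  have hsub := jordan_spectrum_subset φ hsurj hj h
  have h1 : spectralRadius ℂ (φ h) ≤ spectralRadius ℂ h := by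
    simp only [spectralRadius]
    exact iSup₂_le fun k hk => le_iSup₂ (f := fun k (_ : k ∈ spectrum ℂ h) => (‖k‖₊ : ENNReal))
      k (hsub hk)
  rw [hsa.spectralRadius_eq_nnnorm, hh.spectralRadius_eq_nnnorm, ENNReal.coe_le_coe] at h1
  exact h1

lemma jordan_norm_le_two (φ : A →ₗ[ℂ] B) (hsurj : Function.Surjective φ)
    (hstar : ∀ a, φ (star a) = star (φ a))
    (hj : ∀ a b, φ (a * b + b * a) = φ a * φ b + φ b * φ a)
    (a : A) : ‖φ a‖ ≤ 2 * ‖a‖ := by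
  obtain ⟨h, k, hh, hk, hdec, hnh, hnk⟩ := sa_decomp a
  calc ‖φ a‖ = ‖φ h + I • φ k‖ := by rw [hdec, map_add, map_smul]
    _ ≤ ‖φ h‖ + ‖I • φ k‖ := norm_add_le _ _
    _ ≤ ‖h‖ + ‖k‖ := by
        rw [norm_smul]
        simp only [Complex.norm_I, one_mul]
        exact add_le_add (jordan_norm_sa_le φ hsurj hstar hj hh)
          (jordan_norm_sa_le φ hsurj hstar hj hk)
    _ ≤ 2 * ‖a‖ := by linarith

end JordanNorm




/-- A state on a unital C*-algebra: a continuous linear functional `ω` with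
`ω 1 = 1 = ‖ω‖`. -/
def IsState {A : Type*} [NormedRing A] [NormedAlgebra ℂ A] (ω : A →L[ℂ] ℂ) : Prop :=
  ω 1 = 1 ∧ ‖ω‖ = 1

/-- A pure state: an extreme point of the set of states. -/
def IsPureState {A : Type*} [NormedRing A] [NormedAlgebra ℂ A] (ω : A →L[ℂ] ℂ) : Prop :=
  ω ∈ Set.extremePoints ℝ {ρ : A →L[ℂ] ℂ | IsState ρ}

/-- Two states are orthogonal if `‖ω₀ − ω₁‖ = 2`. -/
def StatesOrthogonal {A : Type*} [NormedRing A] [NormedAlgebra ℂ A]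
    (ω₀ ω₁ : A →L[ℂ] ℂ) : Prop :=
  ‖ω₀ - ω₁‖ = 2

section Transfer
variable {A B : Type*}
  [NormedRing A] [StarRing A] [CStarRing A] [NormedAlgebra ℂ A] [CompleteSpace A] [StarModule ℂ A]
  [NormedRing B] [StarRing B] [CStarRing B] [NormedAlgebra ℂ B] [CompleteSpace B] [StarModule ℂ B]

lemma pure_transfer
    (F : (B →L[ℂ] ℂ) → (A →L[ℂ] ℂ)) (G : (A →L[ℂ] ℂ) → (B →L[ℂ] ℂ))
    (hFG : ∀ ρ, F (G ρ) = ρ) (hGF : ∀ ω, G (F ω) = ω)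
    (hGlin : ∀ (u v : ℝ) (ρ₁ ρ₂ : A →L[ℂ] ℂ), G (u • ρ₁ + v • ρ₂) = u • G ρ₁ + v • G ρ₂)
    (hFstate : ∀ ω, IsState ω → IsState (F ω))
    (hGstate : ∀ ρ, IsState ρ → IsState (G ρ))
    {ω : B →L[ℂ] ℂ} (hω : IsPureState ω) : IsPureState (F ω) := by
  obtain ⟨hmem, hext⟩ := hω
  refine ⟨hFstate ω hmem, ?_⟩
  intro ρ₁ h1 ρ₂ h2 hseg
  obtain ⟨u, v, hu, hv, huv, heq⟩ := hseg
  have h3 : u • G ρ₁ + v • G ρ₂ = ω := by rw [← hGlin, heq, hGF]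
  have hres := hext (hGstate ρ₁ h1) (hGstate ρ₂ h2) ⟨u, v, hu, hv, huv, h3⟩
  rw [← hFG ρ₁, hres]

lemma jordan_state_comp (φ : A →ₗ[ℂ] B) (hsurj : Function.Surjective φ)
    (hstar : ∀ a, φ (star a) = star (φ a))
    (hj : ∀ a b, φ (a * b + b * a) = φ a * φ b + φ b * φ a)
    (g : A →L[ℂ] B) (hg : ∀ a, g a = φ a)
    (ω : B →L[ℂ] ℂ) (hω : IsState ω) : IsState (ω.comp g) := by
  have hherm : ∀ b, ω (star b) = (starRingEnd ℂ) (ω b) :=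
    state_hermitian' ω (fun {x} hx => state_im_eq_zero ω hω.1 hω.2 hx)
  have hφ1 : φ 1 = 1 := jordan_one φ hsurj hj
  have h1 : (ω.comp g) 1 = 1 := by
    rw [ContinuousLinearMap.comp_apply, hg, hφ1, hω.1]
  have hnB : Nontrivial B := by
    by_contra hns
    rw [not_nontrivial_iff_subsingleton] at hns
    have h10 : (1:B) = 0 := Subsingleton.elim _ _
    have := hω.1
    rw [h10, map_zero] at this
    exact one_ne_zero this.symm
  have hnA : Nontrivial A := by
    rcases subsingleton_or_nontrivial A with hs | hs
    · exact absurd hsurj.subsingleton (not_subsingleton B)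
    · exact hs
  refine ⟨h1, le_antisymm ?_ ?_⟩
  · refine herm_norm_le_of_sa _ (fun a => ?_) 1 zero_le_one (fun h hh => ?_)
    · rw [ContinuousLinearMap.comp_apply, ContinuousLinearMap.comp_apply, hg, hg, hstar, hherm]
    · rw [ContinuousLinearMap.comp_apply, hg]
      calc ‖ω (φ h)‖ ≤ ‖ω‖ * ‖φ h‖ := ω.le_opNorm _
        _ = ‖φ h‖ := by rw [hω.2, one_mul]
        _ ≤ ‖h‖ := jordan_norm_sa_le φ hsurj hstar hj hh
        _ = 1 * ‖h‖ := (one_mul _).symm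
  · calc (1:ℝ) = ‖(ω.comp g) 1‖ := by rw [h1, norm_one]
      _ ≤ ‖ω.comp g‖ * ‖(1:A)‖ := (ω.comp g).le_opNorm 1
      _ ≤ ‖ω.comp g‖ * 1 := by gcongr; exact norm_one_le_cstar
      _ = ‖ω.comp g‖ := mul_one _

lemma jordan_comp_norm_le (φ : A →ₗ[ℂ] B) (hsurj : Function.Surjective φ)
    (hstar : ∀ a, φ (star a) = star (φ a))
    (hj : ∀ a b, φ (a * b + b * a) = φ a * φ b + φ b * φ a)
    (g : A →L[ℂ] B) (hg : ∀ a, g a = φ a)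
    (f : B →L[ℂ] ℂ) (hf : ∀ b, f (star b) = (starRingEnd ℂ) (f b)) :
    ‖f.comp g‖ ≤ ‖f‖ := by
  refine herm_norm_le_of_sa _ (fun a => ?_) ‖f‖ (norm_nonneg f) (fun h hh => ?_)
  · rw [ContinuousLinearMap.comp_apply, ContinuousLinearMap.comp_apply, hg, hg, hstar, hf]
  · rw [ContinuousLinearMap.comp_apply, hg]
    calc ‖f (φ h)‖ ≤ ‖f‖ * ‖φ h‖ := f.le_opNorm _
      _ ≤ ‖f‖ * ‖h‖ := by
          gcongr
          exact jordan_norm_sa_le φ hsurj hstar hj hh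

end Transfer

/-- Let `φ : A → B` be a Jordan *-isomorphism of unital C*-algebras. Then the map
`Φ : ω ↦ ω ∘ φ` maps the pure states of `B` bijectively onto the pure states of `A`,
is isometric on differences of pure states (in particular bi-orthogonal), and both `Φ`
and its inverse are uniformly continuous with respect to the weak* uniformities
(expressed here via the canonical entourages generated by finite sets of elements). -/
theorem stmt10 {A B : Type*}
    [NormedRing A] [StarRing A] [CStarRing A] [NormedAlgebra ℂ A] [CompleteSpace A]
    [StarModule ℂ A]
    [NormedRing B] [StarRing B] [CStarRing B] [NormedAlgebra ℂ B] [CompleteSpace B]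
    [StarModule ℂ B]
    (φ : A →ₗ[ℂ] B) (hbij : Function.Bijective φ)
    (hstar : ∀ a, φ (star a) = star (φ a))
    (hjordan : ∀ a b, φ (a * b + b * a) = φ a * φ b + φ b * φ a) :
    ∃ Φ : (B →L[ℂ] ℂ) → (A →L[ℂ] ℂ),
      (∀ (ω : B →L[ℂ] ℂ) (a : A), Φ ω a = ω (φ a)) ∧
      Set.BijOn Φ {ω | IsPureState ω} {ω | IsPureState ω} ∧
      (∀ ω₀ ω₁, IsPureState ω₀ → IsPureState ω₁ → ‖Φ ω₀ - Φ ω₁‖ = ‖ω₀ - ω₁‖) ∧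
      (∀ ω₀ ω₁, IsPureState ω₀ → IsPureState ω₁ →
        (StatesOrthogonal ω₀ ω₁ ↔ StatesOrthogonal (Φ ω₀) (Φ ω₁))) ∧
      (∀ (a : A) (ε : ℝ), 0 < ε → ∃ (s : Finset B) (δ : ℝ), 0 < δ ∧
        ∀ ω₀ ω₁, IsPureState ω₀ → IsPureState ω₁ →
          (∀ b ∈ s, ‖ω₀ b - ω₁ b‖ < δ) → ‖Φ ω₀ a - Φ ω₁ a‖ < ε) ∧
      (∀ (b : B) (ε : ℝ), 0 < ε → ∃ (s : Finset A) (δ : ℝ), 0 < δ ∧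
        ∀ ω₀ ω₁, IsPureState ω₀ → IsPureState ω₁ →
          (∀ a ∈ s, ‖Φ ω₀ a - Φ ω₁ a‖ < δ) → ‖ω₀ b - ω₁ b‖ < ε) := by
  classical
  obtain ⟨hinj, hsurj⟩ := hbij
  set e : A ≃ₗ[ℂ] B := LinearEquiv.ofBijective φ ⟨hinj, hsurj⟩ with he
  set χ : B →ₗ[ℂ] A := (e.symm : B →ₗ[ℂ] A) with hχdef
  have hφχ : ∀ b, φ (χ b) = b := fun b => e.apply_symm_apply b
  have hχφ : ∀ a, χ (φ a) = a := fun a => e.symm_apply_apply a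
  have hχsurj : Function.Surjective χ := fun a => ⟨φ a, hχφ a⟩
  have hχstar : ∀ b, χ (star b) = star (χ b) := by
    intro b
    calc χ (star b) = χ (star (φ (χ b))) := by rw [hφχ]
      _ = χ (φ (star (χ b))) := by rw [hstar]
      _ = star (χ b) := hχφ _
  have hχj : ∀ x y, χ (x * y + y * x) = χ x * χ y + χ y * χ x := by
    intro x y
    calc χ (x * y + y * x) = χ (φ (χ x * χ y + χ y * χ x)) := by
          rw [hjordan, hφχ, hφχ]
      _ = χ x * χ y + χ y * χ x := hχφ _
  set ψ : A →L[ℂ] B := φ.mkContinuous 2 (jordan_norm_le_two φ hsurj hstar hjordan) with hψdef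
  set ψ' : B →L[ℂ] A := χ.mkContinuous 2 (jordan_norm_le_two χ hχsurj hχstar hχj) with hψ'def
  have hψ : ∀ a, ψ a = φ a := fun a => rfl
  have hψ' : ∀ b, ψ' b = χ b := fun b => rfl
  set Φ : (B →L[ℂ] ℂ) → (A →L[ℂ] ℂ) := fun ω => ω.comp ψ with hΦdef
  set Φ' : (A →L[ℂ] ℂ) → (B →L[ℂ] ℂ) := fun ρ => ρ.comp ψ' with hΦ'def
  have hΦapp : ∀ (ω : B →L[ℂ] ℂ) (a : A), Φ ω a = ω (φ a) := fun ω a => rfl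
  have hΦ'app : ∀ (ρ : A →L[ℂ] ℂ) (b : B), Φ' ρ b = ρ (χ b) := fun ρ b => rfl
  have hΦ'Φ : ∀ ω, Φ' (Φ ω) = ω := fun ω => ContinuousLinearMap.ext fun b => by
    rw [hΦ'app, hΦapp, hφχ]
  have hΦΦ' : ∀ ρ, Φ (Φ' ρ) = ρ := fun ρ => ContinuousLinearMap.ext fun a => by
    rw [hΦapp, hΦ'app, hχφ]
  have hstateΦ : ∀ ω, IsState ω → IsState (Φ ω) := fun ω hω =>
    jordan_state_comp φ hsurj hstar hjordan ψ hψ ω hω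
  have hstateΦ' : ∀ ρ, IsState ρ → IsState (Φ' ρ) := fun ρ hρ =>
    jordan_state_comp χ hχsurj hχstar hχj ψ' hψ' ρ hρ
  have hΦlin : ∀ (u v : ℝ) (ω₁ ω₂ : B →L[ℂ] ℂ), Φ (u • ω₁ + v • ω₂) = u • Φ ω₁ + v • Φ ω₂ := by
    intro u v ω₁ ω₂
    simp only [hΦdef, ContinuousLinearMap.add_comp, ContinuousLinearMap.smul_comp]
  have hΦ'lin : ∀ (u v : ℝ) (ρ₁ ρ₂ : A →L[ℂ] ℂ), Φ' (u • ρ₁ + v • ρ₂) = u • Φ' ρ₁ + v • Φ' ρ₂ := by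
    intro u v ρ₁ ρ₂
    simp only [hΦ'def, ContinuousLinearMap.add_comp, ContinuousLinearMap.smul_comp]
  -- hermitian facts for states
  have hhermB : ∀ (ω : B →L[ℂ] ℂ), IsState ω → ∀ b, ω (star b) = (starRingEnd ℂ) (ω b) :=
    fun ω hω => state_hermitian' ω (fun {x} hx => state_im_eq_zero ω hω.1 hω.2 hx)
  have hhermA : ∀ (ρ : A →L[ℂ] ℂ), IsState ρ → ∀ a, ρ (star a) = (starRingEnd ℂ) (ρ a) :=
    fun ρ hρ => state_hermitian' ρ (fun {x} hx => state_im_eq_zero ρ hρ.1 hρ.2 hx)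
  -- norm equality on differences of states
  have hnormeq : ∀ ω₀ ω₁ : B →L[ℂ] ℂ, IsState ω₀ → IsState ω₁ →
      ‖Φ ω₀ - Φ ω₁‖ = ‖ω₀ - ω₁‖ := by
    intro ω₀ ω₁ h₀ h₁
    have hd1 : Φ ω₀ - Φ ω₁ = (ω₀ - ω₁).comp ψ := by
      ext a
      simp [hΦapp, hψ]
    have hd2 : ω₀ - ω₁ = (Φ ω₀ - Φ ω₁).comp ψ' := by
      ext b
      simp [hΦapp, hψ, hψ', hφχ]
    have hfB : ∀ b, (ω₀ - ω₁) (star b) = (starRingEnd ℂ) ((ω₀ - ω₁) b) := by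
      intro b
      simp only [ContinuousLinearMap.sub_apply, hhermB ω₀ h₀, hhermB ω₁ h₁, map_sub]
    have hle1 : ‖Φ ω₀ - Φ ω₁‖ ≤ ‖ω₀ - ω₁‖ := by
      rw [hd1]
      exact jordan_comp_norm_le φ hsurj hstar hjordan ψ hψ _ hfB
    have hfA : ∀ a, (Φ ω₀ - Φ ω₁) (star a) = (starRingEnd ℂ) ((Φ ω₀ - Φ ω₁) a) := by
      intro a
      simp only [ContinuousLinearMap.sub_apply, map_sub,
        hhermA (Φ ω₀) (hstateΦ ω₀ h₀) a, hhermA (Φ ω₁) (hstateΦ ω₁ h₁) a]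
    have hle2 : ‖ω₀ - ω₁‖ ≤ ‖Φ ω₀ - Φ ω₁‖ := by
      conv_lhs => rw [hd2]
      exact jordan_comp_norm_le χ hχsurj hχstar hχj ψ' hψ' _ hfA
    exact le_antisymm hle1 hle2
  have hpureState : ∀ (ω : B →L[ℂ] ℂ), IsPureState ω → IsState ω := fun ω hω => hω.1
  have hpureStateA : ∀ (ρ : A →L[ℂ] ℂ), IsPureState ρ → IsState ρ := fun ρ hρ => hρ.1
  refine ⟨Φ, hΦapp, ⟨?_, ?_, ?_⟩, ?_, ?_, ?_, ?_⟩
  · -- MapsTo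
    intro ω hω
    exact pure_transfer Φ Φ' hΦΦ' hΦ'Φ hΦ'lin hstateΦ hstateΦ' hω
  · -- InjOn
    intro ω _ ω' _ h
    rw [← hΦ'Φ ω, h, hΦ'Φ]
  · -- SurjOn
    intro ρ hρ
    exact ⟨Φ' ρ, pure_transfer Φ' Φ hΦ'Φ hΦΦ' hΦlin hstateΦ' hstateΦ hρ, hΦΦ' ρ⟩
  · -- norm equality
    intro ω₀ ω₁ h₀ h₁
    exact hnormeq ω₀ ω₁ (hpureState ω₀ h₀) (hpureState ω₁ h₁)
  · -- orthogonality
    intro ω₀ ω₁ h₀ h₁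
    unfold StatesOrthogonal
    rw [hnormeq ω₀ ω₁ (hpureState ω₀ h₀) (hpureState ω₁ h₁)]
  · -- uniform continuity forward
    intro a ε hε
    refine ⟨{φ a}, ε, hε, fun ω₀ ω₁ _ _ hcl => ?_⟩
    rw [hΦapp, hΦapp]
    exact hcl (φ a) (Finset.mem_singleton_self _)
  · -- uniform continuity backward
    intro b ε hε
    refine ⟨{χ b}, ε, hε, fun ω₀ ω₁ _ _ hcl => ?_⟩
    have := hcl (χ b) (Finset.mem_singleton_self _)
    rwa [hΦapp, hΦapp, hφχ] at this
end

section
/- Let M₁ and M₂ be von Neumann algebras acting on complex Hilbert spaces and let φ : M₁ → M₂ be a linear bijection with φ(1) = 1. Then φ is an order-isomorphism (for every a ∈ M₁, a is positive if and only if φ(a) is positive) if and only if φ is a Jordan *-isomorphism, i.e., φ(a*) = φ(a)* and φ(ab + ba) = φ(a)φ(b) + φ(b)φ(a) for all a, b ∈ M₁. -/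
namespace KadisonAux
open ComplexStarModule


/-- hat function centered at `c` with half-width `δ`. -/
noncomputable def hat (δ c t : ℝ) : ℝ := max 0 (1 - |t - c| / δ)

lemma hat_nonneg (δ c t : ℝ) : 0 ≤ hat δ c t := le_max_left _ _

lemma hat_continuous (δ c : ℝ) : Continuous (hat δ c) := by
  unfold hat; fun_prop

lemma sum_hat_mul (x0 δ : ℝ) (hδ : 0 < δ) (m : ℕ) (hm : 1 ≤ m) (f : ℕ → ℝ)
    (t : ℝ) (ht0 : x0 ≤ t) (ht1 : t ≤ x0 + m * δ) :
    ∃ j : ℕ, ∃ θ : ℝ, j + 1 ≤ m ∧ 0 ≤ θ ∧ θ ≤ 1 ∧ t = x0 + (j + θ) * δ ∧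
      (∑ i ∈ Finset.range (m + 1), f i * hat δ (x0 + i * δ) t)
        = f j * (1 - θ) + f (j + 1) * θ := by
  set s : ℝ := (t - x0) / δ with hs
  have hs0 : 0 ≤ s := div_nonneg (by linarith) hδ.le
  have hsm : s ≤ m := by
    rw [hs, div_le_iff₀ hδ]; linarith
  set j : ℕ := min ⌊s⌋₊ (m - 1) with hj
  have hjm : j + 1 ≤ m := by
    have : j ≤ m - 1 := min_le_right _ _
    omega
  set θ : ℝ := s - j with hθ
  have hjle : (j : ℝ) ≤ s := by
    calc (j : ℝ) ≤ ⌊s⌋₊ := by exact_mod_cast Nat.cast_le.mpr (min_le_left _ _)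
    _ ≤ s := Nat.floor_le hs0
  have hθ0 : 0 ≤ θ := by simp [hθ]; linarith
  have hθ1 : θ ≤ 1 := by
    rcases le_or_gt (⌊s⌋₊) (m - 1) with h | h
    · have hjf : j = ⌊s⌋₊ := by omega
      have := Nat.lt_floor_add_one s
      rw [hθ, hjf]; push_cast; linarith
    · have hjf : j = m - 1 := by omega
      have hcast : ((m - 1 : ℕ) : ℝ) = (m : ℝ) - 1 := by
        have : (1:ℕ) ≤ m := hm
        push_cast [Nat.cast_sub this]; ring
      rw [hθ, hjf, hcast]; linarith
  have ht : t = x0 + (j + θ) * δ := by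
    have : s * δ = t - x0 := by rw [hs]; field_simp
    rw [hθ]; push_cast; nlinarith [this]
  refine ⟨j, θ, hjm, hθ0, hθ1, ht, ?_⟩
  have key : ∀ i : ℕ, hat δ (x0 + i * δ) t = max 0 (1 - |s - i|) := by
    intro i
    have : t - (x0 + i * δ) = (s - i) * δ := by
      have : s * δ = t - x0 := by rw [hs]; field_simp
      nlinarith [this]
    rw [hat, this, abs_mul, abs_of_pos hδ, mul_div_assoc, div_self hδ.ne', mul_one]
  have hsj : s = j + θ := by rw [hθ]; ring
  have hzero : ∀ i ∈ Finset.range (m + 1), i ∉ ({j, j + 1} : Finset ℕ) →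
      f i * hat δ (x0 + i * δ) t = 0 := by
    intro i _ hi
    simp only [Finset.mem_insert, Finset.mem_singleton] at hi
    push_neg at hi
    obtain ⟨h1, h2⟩ := hi
    have : 1 ≤ |s - i| := by
      rcases lt_or_gt_of_ne h1 with h | h
      · -- i < j
        have : (i : ℝ) ≤ (j : ℝ) - 1 := by
          have h2 : i + 1 ≤ j := h
          have h3 := (Nat.cast_le (α := ℝ)).mpr h2
          push_cast at h3; linarith
        rw [abs_of_nonneg (by rw [hsj]; linarith)]
        rw [hsj]; linarith
      · -- i > j + 1, i.e. i ≥ j + 2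
        have hij : (j : ℝ) + 2 ≤ i := by
          have : j + 2 ≤ i := by omega
          exact_mod_cast this
        rw [abs_of_nonpos (by rw [hsj]; linarith), hsj]; linarith
    rw [key i, max_eq_left (by linarith), mul_zero]
  have hsubset : ({j, j + 1} : Finset ℕ) ⊆ Finset.range (m + 1) := by
    intro i hi
    simp only [Finset.mem_insert, Finset.mem_singleton] at hi
    rcases hi with rfl | rfl <;> simp [Finset.mem_range] <;> omega
  rw [← Finset.sum_subset hsubset hzero]
  rw [Finset.sum_insert (by simp), Finset.sum_singleton]
  have hvj : hat δ (x0 + j * δ) t = 1 - θ := by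
    rw [key j, hsj]
    simp only [add_sub_cancel_left]
    rw [abs_of_nonneg hθ0]
    exact max_eq_right (by linarith)
  have hvj1 : hat δ (x0 + ((j + 1 : ℕ) : ℝ) * δ) t = θ := by
    rw [key (j + 1)]
    have habs : |s - ((j + 1 : ℕ) : ℝ)| = 1 - θ := by
      push_cast
      rw [hsj, show (j : ℝ) + θ - ((j : ℝ) + 1) = -(1 - θ) by ring, abs_neg,
        abs_of_nonneg (by linarith)]
    rw [habs, show (1 : ℝ) - (1 - θ) = θ by ring]
    exact max_eq_right hθ0
  rw [hvj, hvj1]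


lemma pos_iff_exists {A : Type*} [CStarAlgebra A] [PartialOrder A] [StarOrderedRing A]
    (a : A) : 0 ≤ a ↔ ∃ b : A, a = star b * b := by
  constructor
  · intro ha
    exact ⟨CFC.sqrt a, by
      rw [(IsSelfAdjoint.of_nonneg (CFC.sqrt_nonneg (a := a))).star_eq,
        CFC.sqrt_mul_sqrt_self a ha]⟩
  · rintro ⟨b, rfl⟩; exact star_mul_self_nonneg b



variable {B : Type*} [CStarAlgebra B] [PartialOrder B] [StarOrderedRing B]

lemma core (n : ℕ) (c : ℕ → ℝ) (w : ℕ → B)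
    (hsum : ∑ i ∈ Finset.range n, star (w i) * w i = 1) :
    (∑ i ∈ Finset.range n, c i • (star (w i) * w i)) *
      (∑ i ∈ Finset.range n, c i • (star (w i) * w i)) ≤
    ∑ i ∈ Finset.range n, (c i * c i) • (star (w i) * w i) := by
  set b : ℕ → B := fun i => star (w i) * w i with hb
  set T : B := ∑ i ∈ Finset.range n, c i • b i with hT
  have hbsa : ∀ i, star (b i) = b i := by
    intro i; rw [hb]; simp [star_mul, star_star]
  have hTsa : star T = T := by
    rw [hT, star_sum]
    exact Finset.sum_congr rfl fun i _ => by rw [star_smul, star_trivial, hbsa]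
  set r : ℕ → B := fun i => c i • w i - w i * T with hr
  have expand : ∀ i, star (r i) * r i
      = (c i * c i) • b i - c i • (b i * T) - c i • (T * b i) + T * (b i * T) := by
    intro i
    rw [hr]
    simp only [star_sub, star_smul, star_trivial, star_mul, hTsa]
    rw [sub_mul, mul_sub, mul_sub]
    simp only [smul_mul_assoc, mul_smul_comm, smul_smul, mul_assoc]
    simp only [hb, mul_assoc]
    abel
  have e1 : ∑ i ∈ Finset.range n, c i • (b i * T) = T * T := by
    simp_rw [← smul_mul_assoc]
    rw [← Finset.sum_mul, ← hT]
  have e2 : ∑ i ∈ Finset.range n, c i • (T * b i) = T * T := by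
    simp_rw [← mul_smul_comm]
    rw [← Finset.mul_sum, ← hT]
  have e3 : ∑ i ∈ Finset.range n, T * (b i * T) = T * T := by
    simp_rw [← Finset.mul_sum, ← Finset.sum_mul, hsum, one_mul]
  have hsum_expand : ∑ i ∈ Finset.range n, star (r i) * r i
      = (∑ i ∈ Finset.range n, (c i * c i) • b i) - T * T := by
    calc ∑ i ∈ Finset.range n, star (r i) * r i
        = ∑ i ∈ Finset.range n,
            ((c i * c i) • b i - c i • (b i * T) - c i • (T * b i) + T * (b i * T)) :=
          Finset.sum_congr rfl fun i _ => expand i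
      _ = (∑ i ∈ Finset.range n, (c i * c i) • b i)
            - (∑ i ∈ Finset.range n, c i • (b i * T))
            - (∑ i ∈ Finset.range n, c i • (T * b i))
            + ∑ i ∈ Finset.range n, T * (b i * T) := by
          rw [Finset.sum_add_distrib, Finset.sum_sub_distrib, Finset.sum_sub_distrib]
      _ = (∑ i ∈ Finset.range n, (c i * c i) • b i) - T * T := by
          rw [e1, e2, e3]; abel
  have hnn : (0 : B) ≤ ∑ i ∈ Finset.range n, star (r i) * r i :=
    Finset.sum_nonneg fun i _ => star_mul_self_nonneg _
  rw [hsum_expand] at hnn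
  exact sub_nonneg.mp hnn





variable {A B : Type*} [CStarAlgebra A] [PartialOrder A] [StarOrderedRing A]
  [CStarAlgebra B] [PartialOrder B] [StarOrderedRing B]

lemma lin_mono (φ : A →ₗ[ℂ] B) (hpos : ∀ a : A, 0 ≤ a → 0 ≤ φ a) {x y : A} (hxy : x ≤ y) :
    φ x ≤ φ y := by
  rw [← sub_nonneg, ← map_sub]
  exact hpos _ (sub_nonneg.mpr hxy)

lemma ks [Nontrivial A] (φ : A →ₗ[ℂ] B) (hone : φ 1 = 1)
    (hpos : ∀ a : A, 0 ≤ a → 0 ≤ φ a) (h : A) (hh : IsSelfAdjoint h) :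
    φ h * φ h ≤ φ (h * h) := by
  have key : ∀ δ : ℝ, 0 < δ → φ h * φ h ≤ φ (h * h) + (δ * δ) • 1 := by
    intro δ hδ
    set R : ℝ := ‖h‖ with hR
    set m : ℕ := ⌈(2 * R) / δ⌉₊ + 1 with hm
    have hm1 : 1 ≤ m := by omega
    set x0 : ℝ := -R with hx0
    have hspec : ∀ t ∈ spectrum ℝ h, x0 ≤ t ∧ t ≤ x0 + m * δ := by
      intro t ht
      have habs : |t| ≤ R := by
        simpa [Real.norm_eq_abs] using spectrum.norm_le_norm_of_mem ht
      have h2R : 2 * R ≤ m * δ := by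
        have h1 : (2 * R) / δ ≤ (⌈(2 * R) / δ⌉₊ : ℝ) := Nat.le_ceil _
        have h2 : ((⌈(2 * R) / δ⌉₊ : ℝ)) ≤ m := by rw [hm]; push_cast; linarith
        have := (div_le_iff₀ hδ).mp (h1.trans h2)
        linarith
      exact ⟨by rw [hx0]; linarith [(abs_le.mp habs).1],
             by rw [hx0]; linarith [(abs_le.mp habs).2]⟩
    set c : ℕ → ℝ := fun i => x0 + i * δ with hc
    set u : ℕ → ℝ → ℝ := fun i => hat δ (c i) with hu
    have hucont : ∀ i, ContinuousOn (u i) (spectrum ℝ h) := fun i =>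
      (hat_continuous δ _).continuousOn
    set a : ℕ → A := fun i => cfc (u i) h with ha
    have hann : ∀ i, 0 ≤ a i := fun i => cfc_nonneg (fun x _ => hat_nonneg _ _ _)
    have sum1 : ∑ i ∈ Finset.range (m + 1), a i = 1 := by
      rw [ha, ← cfc_sum _ h _ (fun i _ => hucont i)]
      rw [show (∑ i ∈ Finset.range (m+1), u i) = fun t => ∑ i ∈ Finset.range (m+1), u i t by
        ext t; simp]
      rw [← cfc_one (R := ℝ) (a := h) hh]
      apply cfc_congr
      intro t ht
      obtain ⟨ht0, ht1⟩ := hspec t ht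
      obtain ⟨j, θ, hj, hθ0, hθ1, hteq, hsum⟩ :=
        sum_hat_mul x0 δ hδ m hm1 (fun _ => 1) t ht0 ht1
      simp only [one_mul] at hsum
      simp only [hu, hc]
      rw [hsum, Pi.one_apply]; ring
    have sumh : ∑ i ∈ Finset.range (m + 1), c i • a i = h := by
      have e : ∀ i, c i • a i = cfc (fun t => c i * u i t) h := fun i =>
        (cfc_const_mul (c i) (u i) h (hucont i)).symm
      simp_rw [e]
      rw [← cfc_sum _ h _ (fun i _ => (show Continuous (fun t => c i * u i t) from continuous_const.mul (hat_continuous δ _)).continuousOn)]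
      rw [show (∑ i ∈ Finset.range (m+1), fun t => c i * u i t)
          = fun t => ∑ i ∈ Finset.range (m+1), c i * u i t by ext t; simp]
      conv_rhs => rw [← cfc_id (R := ℝ) h hh]
      apply cfc_congr
      intro t ht
      obtain ⟨ht0, ht1⟩ := hspec t ht
      obtain ⟨j, θ, hj, hθ0, hθ1, hteq, hsum⟩ :=
        sum_hat_mul x0 δ hδ m hm1 c t ht0 ht1
      simp only [hu, hc, id_eq] at hsum ⊢
      rw [hsum, hteq]
      push_cast
      ring
    have sumsq : ∑ i ∈ Finset.range (m + 1), (c i * c i) • a i ≤ h * h + (δ * δ) • 1 := by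
      have e : ∀ i, (c i * c i) • a i = cfc (fun t => (c i * c i) * u i t) h := fun i =>
        (cfc_const_mul (c i * c i) (u i) h (hucont i)).symm
      simp_rw [e]
      rw [← cfc_sum _ h _ (fun i _ => (show Continuous (fun t => (c i * c i) * u i t) from continuous_const.mul (hat_continuous δ _)).continuousOn)]
      rw [show (∑ i ∈ Finset.range (m+1), fun t => (c i * c i) * u i t)
          = fun t => ∑ i ∈ Finset.range (m+1), (c i * c i) * u i t by ext t; simp]
      have target_eq : h * h + (δ * δ) • (1 : A) = cfc (fun t : ℝ => t * t + δ * δ) h := by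
        rw [cfc_add (a := h) _ _ (by fun_prop) (by fun_prop),
          cfc_mul (a := h) _ _ (by fun_prop) (by fun_prop), cfc_id' (R := ℝ) h hh,
          cfc_const (δ * δ) h hh, Algebra.algebraMap_eq_smul_one]
      rw [target_eq]
      have hcont1 : ContinuousOn (fun t => ∑ i ∈ Finset.range (m+1), c i * c i * u i t)
          (spectrum ℝ h) :=
        (continuous_finset_sum _ fun i _ =>
          continuous_const.mul (hat_continuous δ (c i))).continuousOn
      have hcont2 : ContinuousOn (fun t : ℝ => t * t + δ * δ) (spectrum ℝ h) := by fun_prop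
      apply cfc_mono ?_ hcont1 hcont2
      intro t ht
      obtain ⟨ht0, ht1⟩ := hspec t ht
      obtain ⟨j, θ, hj, hθ0, hθ1, hteq, hsum⟩ :=
        sum_hat_mul x0 δ hδ m hm1 (fun i => c i * c i) t ht0 ht1
      simp only [hu, hc] at hsum ⊢
      rw [hsum, hteq]
      push_cast at hsum ⊢
      nlinarith [mul_nonneg (sq_nonneg (1 - 2*θ)) (mul_pos hδ hδ).le,
        mul_nonneg (mul_nonneg hθ0 (sub_nonneg.mpr hθ1)) (mul_pos hδ hδ).le]
    -- now push through φ
    have hbpos : ∀ i, 0 ≤ φ (a i) := fun i => hpos _ (hann i)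
    choose w hw using fun i => (pos_iff_exists (φ (a i))).mp (hbpos i)
    have hw1 : ∑ i ∈ Finset.range (m + 1), star (w i) * w i = 1 := by
      simp_rw [← hw]
      rw [← map_sum, sum1, hone]
    have hTeq : φ h = ∑ i ∈ Finset.range (m + 1), c i • (star (w i) * w i) := by
      simp_rw [← hw]
      rw [← sumh, map_sum]
      exact Finset.sum_congr rfl fun i _ => φ.map_smul_of_tower (c i) (a i)
    have hScore := core (m + 1) c w hw1
    rw [← hTeq] at hScore
    refine hScore.trans ?_
    have e2 : ∑ i ∈ Finset.range (m + 1), (c i * c i) • (star (w i) * w i)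
        = φ (∑ i ∈ Finset.range (m + 1), (c i * c i) • a i) := by
      simp_rw [← hw]
      rw [map_sum]
      exact Finset.sum_congr rfl fun i _ => (φ.map_smul_of_tower _ (a i)).symm
    rw [e2]
    have := lin_mono φ hpos sumsq
    rwa [map_add, φ.map_smul_of_tower, hone] at this
  -- limit δ → 0
  set D : B := φ (h * h) - φ h * φ h with hD
  have hmem : ∀ n : ℕ, D + ((1/(n+1) : ℝ) * (1/(n+1))) • (1:B) ∈ {x : B | 0 ≤ x} := by
    intro n
    have hδ : (0:ℝ) < 1/(n+1) := by positivity
    have hk := sub_nonneg.mpr (key _ hδ)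
    simp only [Set.mem_setOf_eq, hD]
    rwa [show φ (h*h) + ((1/(n+1) : ℝ) * (1/(n+1))) • (1:B) - φ h * φ h
      = φ (h*h) - φ h * φ h + ((1/(n+1) : ℝ) * (1/(n+1))) • (1:B) from by abel] at hk
  have h0 : Filter.Tendsto (fun n : ℕ => ((1/(n+1) : ℝ) * (1/(n+1)))) Filter.atTop (nhds 0) := by
    have t1 := tendsto_one_div_add_atTop_nhds_zero_nat (𝕜 := ℝ)
    simpa using t1.mul t1
  have htend : Filter.Tendsto (fun n : ℕ => D + ((1/(n+1):ℝ) * (1/(n+1))) • (1:B))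
      Filter.atTop (nhds D) := by
    have := (h0.smul_const (1:B)).const_add D
    simpa using this
  have hmem' := (CStarAlgebra.isClosed_nonneg (A := B)).mem_of_tendsto htend
    (Filter.Eventually.of_forall hmem)
  rw [← sub_nonneg]
  exact hmem'





section pieces
variable (φ : A →ₗ[ℂ] B) (hpos : ∀ a : A, 0 ≤ a → 0 ≤ φ a)

open Complex in
include hpos in
lemma map_isSelfAdjoint {x : A} (hx : IsSelfAdjoint x) : IsSelfAdjoint (φ x) := by
  have hdec : x = x⁺ - x⁻ := (CFC.posPart_sub_negPart x hx).symm
  rw [hdec, map_sub]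
  exact ((hpos _ (CFC.posPart_nonneg x)).isSelfAdjoint).sub
    ((hpos _ (CFC.negPart_nonneg x)).isSelfAdjoint)

open Complex in
include hpos in
lemma map_star' (x : A) : φ (star x) = star (φ x) := by
  have dec := realPart_add_I_smul_imaginaryPart x
  have hre : IsSelfAdjoint ((ℜ x : A)) := (ℜ x).2
  have him : IsSelfAdjoint ((ℑ x : A)) := (ℑ x).2
  have hstar : star x = (ℜ x : A) - I • (ℑ x : A) := by
    conv_lhs => rw [← dec]
    rw [star_add, star_smul, hre.star_eq, him.star_eq]
    simp [Complex.star_def, Complex.conj_I, sub_eq_add_neg, neg_smul]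
  have h1 : φ x = φ (ℜ x : A) + I • φ (ℑ x : A) := by
    conv_lhs => rw [← dec]
    rw [map_add, map_smul]
  rw [hstar, map_sub, map_smul, h1, star_add, star_smul,
    (map_isSelfAdjoint φ hpos hre).star_eq, (map_isSelfAdjoint φ hpos him).star_eq]
  simp [Complex.star_def, Complex.conj_I, sub_eq_add_neg, neg_smul]

end pieces

theorem kadison [Nontrivial A] [Nontrivial B] (φ : A →ₗ[ℂ] B)
    (hbij : Function.Bijective φ) (hone : φ 1 = 1) :
    (∀ a : A, (∃ b : A, a = star b * b) ↔ (∃ c : B, φ a = star c * c)) ↔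
    ((∀ a : A, φ (star a) = star (φ a)) ∧
      (∀ a b : A, φ (a * b + b * a) = φ a * φ b + φ b * φ a)) := by
  set e : A ≃ₗ[ℂ] B := LinearEquiv.ofBijective φ hbij with he
  have he_apply : ∀ a, e a = φ a := fun _ => rfl
  set ψ : B →ₗ[ℂ] A := e.symm.toLinearMap with hψ
  have hψφ : ∀ a, ψ (φ a) = a := fun a => e.symm_apply_apply a
  have hφψ : ∀ b, φ (ψ b) = b := fun b => e.apply_symm_apply b
  have hψone : ψ 1 = 1 := by rw [← hone]; exact hψφ 1
  constructor
  · -- order iso → Jordan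
    intro hp
    have hP : ∀ a : A, 0 ≤ a ↔ 0 ≤ φ a := by
      intro a
      rw [pos_iff_exists a, pos_iff_exists (φ a)]
      exact hp a
    have hpos : ∀ a : A, 0 ≤ a → 0 ≤ φ a := fun a ha => (hP a).mp ha
    have hpos' : ∀ b : B, 0 ≤ b → 0 ≤ ψ b := by
      intro b hb
      have := (hP (ψ b)).mpr (by rwa [hφψ])
      exact this
    -- squares of selfadjoints
    have hsq : ∀ x : A, IsSelfAdjoint x → φ (x * x) = φ x * φ x := by
      intro x hx
      have h1 : φ x * φ x ≤ φ (x * x) := ks φ hone hpos x hx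
      have hk : IsSelfAdjoint (φ x) := map_isSelfAdjoint φ hpos hx
      have h2 := ks ψ hψone hpos' (φ x) hk
      rw [hψφ] at h2
      -- h2 : x * x ≤ ψ (φ x * φ x)
      have h3 := lin_mono φ hpos h2
      rw [hφψ] at h3
      exact le_antisymm h3 h1
    have hstar : ∀ a : A, φ (star a) = star (φ a) := map_star' φ hpos
    refine ⟨hstar, ?_⟩
    -- Jordan on selfadjoint pairs
    have hj_sa : ∀ x y : A, IsSelfAdjoint x → IsSelfAdjoint y →
        φ (x * y + y * x) = φ x * φ y + φ y * φ x := by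
      intro x y hx hy
      have h1 := hsq (x + y) (hx.add hy)
      have e1 : (x + y) * (x + y) = x * x + (x * y + y * x) + y * y := by noncomm_ring
      have e2 : (φ x + φ y) * (φ x + φ y)
          = φ x * φ x + (φ x * φ y + φ y * φ x) + φ y * φ y := by noncomm_ring
      rw [e1] at h1
      rw [show φ (x + y) = φ x + φ y from map_add φ x y, e2] at h1
      rw [map_add, map_add, hsq x hx, hsq y hy] at h1
      exact add_left_cancel (add_right_cancel h1)
    -- extend bilinearly
    set P : A → A → Prop := fun a b => φ (a * b + b * a) = φ a * φ b + φ b * φ a with hPdef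
    have step2 : ∀ (x y1 y2 : A), P x y1 → P x y2 → P x (y1 + Complex.I • y2) := by
      intro x y1 y2 h1 h2
      simp only [hPdef] at h1 h2 ⊢
      have lhs_eq : x * (y1 + Complex.I • y2) + (y1 + Complex.I • y2) * x
          = (x * y1 + y1 * x) + Complex.I • (x * y2 + y2 * x) := by
        simp only [mul_add, add_mul, mul_smul_comm, smul_mul_assoc, smul_add]
        abel
      rw [lhs_eq, map_add, map_smul, h1, h2, map_add, map_smul]
      simp only [mul_add, add_mul, mul_smul_comm, smul_mul_assoc, smul_add]
      abel
    have step1 : ∀ (x1 x2 y : A), P x1 y → P x2 y → P (x1 + Complex.I • x2) y := by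
      intro x1 x2 y h1 h2
      simp only [hPdef] at h1 h2 ⊢
      have lhs_eq : (x1 + Complex.I • x2) * y + y * (x1 + Complex.I • x2)
          = (x1 * y + y * x1) + Complex.I • (x2 * y + y * x2) := by
        simp only [mul_add, add_mul, mul_smul_comm, smul_mul_assoc, smul_add]
        abel
      rw [lhs_eq, map_add, map_smul, h1, h2, map_add, map_smul]
      simp only [mul_add, add_mul, mul_smul_comm, smul_mul_assoc, smul_add]
      abel
    intro a b
    have deca := realPart_add_I_smul_imaginaryPart a
    have decb := realPart_add_I_smul_imaginaryPart b
    have key : P a b := by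
      rw [← deca, ← decb]
      apply step1
      · apply step2
        · exact hj_sa _ _ (ℜ a).2 (ℜ b).2
        · exact hj_sa _ _ (ℜ a).2 (ℑ b).2
      · apply step2
        · exact hj_sa _ _ (ℑ a).2 (ℜ b).2
        · exact hj_sa _ _ (ℑ a).2 (ℑ b).2
    exact key
  · -- Jordan → order iso
    rintro ⟨hstar, hjordan⟩
    have hsq : ∀ a : A, φ (a * a) = φ a * φ a := by
      intro a
      have := hjordan a a
      rw [map_add] at this
      have h2 : (2:ℂ) • φ (a * a) = (2:ℂ) • (φ a * φ a) := by
        rw [two_smul, two_smul]; exact this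
      exact smul_right_injective B two_ne_zero h2
    have hstar' : ∀ b : B, ψ (star b) = star (ψ b) := by
      intro b
      apply hbij.1
      rw [hφψ, hstar, hφψ]
    have hsq' : ∀ b : B, ψ (b * b) = ψ b * ψ b := by
      intro b
      apply hbij.1
      have hthis := hjordan (ψ b) (ψ b)
      rw [map_add, hφψ] at hthis
      have h2 : (2:ℂ) • φ (ψ b * ψ b) = (2:ℂ) • (b * b) := by
        rw [two_smul, two_smul]; exact hthis
      have h3 := smul_right_injective B (two_ne_zero (α := ℂ)) h2
      rw [hφψ, h3]
    -- helper applied to both φ and ψ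
    have main : ∀ a : A, (∃ b : A, a = star b * b) → ∃ c : B, φ a = star c * c := by
      rintro a ⟨b, rfl⟩
      have hpos : (0:A) ≤ star b * b := star_mul_self_nonneg b
      set y : A := CFC.sqrt (star b * b) with hy
      have hynn : 0 ≤ y := CFC.sqrt_nonneg (a := star b * b)
      have hysa : IsSelfAdjoint y := hynn.isSelfAdjoint
      have hyy : y * y = star b * b := CFC.sqrt_mul_sqrt_self _ hpos
      refine ⟨φ y, ?_⟩
      rw [← hyy, hsq y]
      congr 1
      rw [← hstar, hysa.star_eq]
    have main' : ∀ b : B, (∃ c : B, b = star c * c) → ∃ d : A, ψ b = star d * d := by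
      rintro b ⟨c, rfl⟩
      have hpos : (0:B) ≤ star c * c := star_mul_self_nonneg c
      set y : B := CFC.sqrt (star c * c) with hy
      have hynn : 0 ≤ y := CFC.sqrt_nonneg (a := star c * c)
      have hysa : IsSelfAdjoint y := hynn.isSelfAdjoint
      have hyy : y * y = star c * c := CFC.sqrt_mul_sqrt_self _ hpos
      refine ⟨ψ y, ?_⟩
      rw [← hyy, hsq' y]
      congr 1
      rw [← hstar', hysa.star_eq]
    intro a
    constructor
    · exact main a
    · rintro h
      obtain ⟨d, hd⟩ := main' (φ a) h
      rw [hψφ] at hd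
      exact ⟨d, hd⟩


section VNA
variable {H : Type*} [NormedAddCommGroup H] [InnerProductSpace ℂ H] [CompleteSpace H]

lemma isClosed_centralizer (s : Set (H →L[ℂ] H)) : IsClosed (Set.centralizer s) := by
  have : Set.centralizer s = ⋂ m ∈ s, {x : H →L[ℂ] H | m * x = x * m} := by
    ext x; simp [Set.centralizer, Set.mem_iInter, eq_comm]
  rw [this]
  exact isClosed_biInter fun m _ => isClosed_eq (by continuity) (by continuity)

lemma vna_isClosed (M : VonNeumannAlgebra H) :
    IsClosed (M.toStarSubalgebra : Set (H →L[ℂ] H)) := by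
  have := M.centralizer_centralizer'
  rw [show (M.toStarSubalgebra : Set (H →L[ℂ] H)) = M.carrier from rfl, ← this]
  exact isClosed_centralizer _

end VNA

end KadisonAux

/-- A unital linear bijection `φ` between von Neumann algebras is an order-isomorphism
(`a` is positive iff `φ a` is positive) if and only if it is a Jordan *-isomorphism. -/
theorem stmt14 {H₁ H₂ : Type*}
    [NormedAddCommGroup H₁] [InnerProductSpace ℂ H₁] [CompleteSpace H₁]
    [NormedAddCommGroup H₂] [InnerProductSpace ℂ H₂] [CompleteSpace H₂]
    (M₁ : VonNeumannAlgebra H₁) (M₂ : VonNeumannAlgebra H₂)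
    (φ : M₁.toStarSubalgebra →ₗ[ℂ] M₂.toStarSubalgebra)
    (hbij : Function.Bijective φ) (hone : φ 1 = 1) :
    (∀ a : M₁.toStarSubalgebra,
        (∃ b : M₁.toStarSubalgebra, a = star b * b) ↔
        (∃ c : M₂.toStarSubalgebra, φ a = star c * c)) ↔
    ((∀ a : M₁.toStarSubalgebra, φ (star a) = star (φ a)) ∧
      (∀ a b : M₁.toStarSubalgebra, φ (a * b + b * a) = φ a * φ b + φ b * φ a)) := by
  letI : CompleteSpace M₁.toStarSubalgebra := (KadisonAux.vna_isClosed M₁).completeSpace_coe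
  letI : CompleteSpace M₂.toStarSubalgebra := (KadisonAux.vna_isClosed M₂).completeSpace_coe
  letI instA : CStarAlgebra M₁.toStarSubalgebra := {}
  letI instB : CStarAlgebra M₂.toStarSubalgebra := {}
  letI pOrd₁ : PartialOrder M₁.toStarSubalgebra := CStarAlgebra.spectralOrder _
  letI sOrd₁ : @StarOrderedRing M₁.toStarSubalgebra _ pOrd₁ _ :=
    CStarAlgebra.spectralOrderedRing _
  letI pOrd₂ : PartialOrder M₂.toStarSubalgebra := CStarAlgebra.spectralOrder _
  letI sOrd₂ : @StarOrderedRing M₂.toStarSubalgebra _ pOrd₂ _ :=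
    CStarAlgebra.spectralOrderedRing _
  by_cases hs : Subsingleton M₁.toStarSubalgebra
  · haveI hsB : Subsingleton M₂.toStarSubalgebra := ⟨fun x y => by
      obtain ⟨x', rfl⟩ := hbij.2 x
      obtain ⟨y', rfl⟩ := hbij.2 y
      rw [Subsingleton.elim x' y']⟩
    constructor
    · intro _
      exact ⟨fun a => Subsingleton.elim _ _, fun a b => Subsingleton.elim _ _⟩
    · intro _ a
      exact ⟨fun _ => ⟨φ a, Subsingleton.elim _ _⟩, fun _ => ⟨a, Subsingleton.elim _ _⟩⟩
  · haveI hA : Nontrivial M₁.toStarSubalgebra := not_subsingleton_iff_nontrivial.mp hs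
    haveI hB : Nontrivial M₂.toStarSubalgebra := by
      obtain ⟨x, y, hxy⟩ := hA
      exact ⟨⟨φ x, φ y, fun h => hxy (hbij.1 h)⟩⟩
    exact @KadisonAux.kadison _ _ instA pOrd₁ sOrd₁ instB pOrd₂ sOrd₂ hA hB φ hbij hone
end

section
/- Let M₁ and M₂ be von Neumann algebras acting on complex Hilbert spaces and let φ : M₁ → M₂ be a Jordan *-isomorphism of M₁ onto M₂. Then there exists a projection E ∈ M₁ which is central (E = E* = E² and EA = AE for all A ∈ M₁) such that F := φ(E) is a central projection of M₂ and, for all A, B ∈ M₁, φ(AB)·F = φ(A)φ(B)·F and φ(AB)·(1 − F) = φ(B)φ(A)·(1 − F); that is, φ acts as a *-homomorphism on the corner determined by F and as a *-antihomomorphism on the corner determined by 1 − F. -/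
set_option maxHeartbeats 4000000

section KadisonAux

private lemma aux_half {M : Type*} [AddCommGroup M] [Module ℂ M] {x y : M}
    (h : x + x = y + y) : x = y := by
  have h2 : (2 : ℂ) • x = (2 : ℂ) • y := by rw [two_smul, two_smul]; exact h
  calc x = (2:ℂ)⁻¹ • ((2:ℂ) • x) := (inv_smul_smul₀ two_ne_zero x).symm
    _ = (2:ℂ)⁻¹ • ((2:ℂ) • y) := by rw [h2]
    _ = y := inv_smul_smul₀ two_ne_zero y

private lemma aux_zero_of_self {M : Type*} [AddCommGroup M] [Module ℂ M] {x : M}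
    (h : x + x = 0) : x = 0 :=
  aux_half (y := 0) (by rw [h, add_zero])

variable {R A : Type*} [Ring R] [Algebra ℂ R] [Ring A] [Algebra ℂ A]

private lemma aux_J2 (φ : R →ₗ[ℂ] A)
    (hj : ∀ a b, φ (a * b + b * a) = φ a * φ b + φ b * φ a) (a b : R) :
    φ (a * b * a) = φ a * φ b * φ a := by
  have h5 : φ (a * a) = φ a * φ a := by
    have := hj a a
    exact aux_half (by rw [← map_add]; exact this)
  have h1 : φ (a * b * a) + φ (b * (a * a)) = φ a * φ (b * a) + φ (b * a) * φ a := by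
    have h := hj a (b * a)
    have e : a * (b * a) + b * a * a = a * b * a + b * (a * a) := by noncomm_ring
    rw [e, map_add] at h
    exact h
  have h2 : φ (a * b * a) + φ (a * a * b) = φ (a * b) * φ a + φ a * φ (a * b) := by
    have h := hj (a * b) a
    have e : a * b * a + a * (a * b) = a * b * a + a * a * b := by noncomm_ring
    rw [e, map_add] at h
    exact h
  have h4 : φ (a * a * b) + φ (b * (a * a)) = φ (a * a) * φ b + φ b * φ (a * a) := by
    have h := hj (a * a) b
    rw [map_add] at h
    exact h
  have h3 : φ (a * b) + φ (b * a) = φ a * φ b + φ b * φ a := by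
    have h := hj a b
    rw [map_add] at h
    exact h
  have d1 : (φ (a*b*a) + φ (b*(a*a))) - (φ a * φ (b*a) + φ (b*a) * φ a) = 0 := sub_eq_zero.mpr h1
  have d2 : (φ (a*b*a) + φ (a*a*b)) - (φ (a*b) * φ a + φ a * φ (a*b)) = 0 := sub_eq_zero.mpr h2
  have d4 : (φ (a*a*b) + φ (b*(a*a))) - (φ (a*a) * φ b + φ b * φ (a*a)) = 0 := sub_eq_zero.mpr h4
  have d3 : (φ (a*b) + φ (b*a)) - (φ a * φ b + φ b * φ a) = 0 := sub_eq_zero.mpr h3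
  have d5 : φ (a*a) - φ a * φ a = 0 := sub_eq_zero.mpr h5
  apply aux_half
  have main : (φ (a*b*a) + φ (a*b*a)) - (φ a * φ b * φ a + φ a * φ b * φ a)
      = ((φ (a*b*a) + φ (b*(a*a))) - (φ a * φ (b*a) + φ (b*a) * φ a))
      + ((φ (a*b*a) + φ (a*a*b)) - (φ (a*b) * φ a + φ a * φ (a*b)))
      - ((φ (a*a*b) + φ (b*(a*a))) - (φ (a*a) * φ b + φ b * φ (a*a)))
      + φ a * ((φ (a*b) + φ (b*a)) - (φ a * φ b + φ b * φ a))
      + ((φ (a*b) + φ (b*a)) - (φ a * φ b + φ b * φ a)) * φ a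
      - (φ (a*a) - φ a * φ a) * φ b
      - φ b * (φ (a*a) - φ a * φ a) := by noncomm_ring
  rw [d1, d2, d4, d3, d5] at main
  simp only [mul_zero, zero_mul, add_zero, sub_zero, zero_sub, neg_zero] at main
  exact sub_eq_zero.mp main

private lemma aux_J3 (φ : R →ₗ[ℂ] A)
    (hj : ∀ a b, φ (a * b + b * a) = φ a * φ b + φ b * φ a) (u y v : R) :
    φ (u * y * v + v * y * u) = φ u * φ y * φ v + φ v * φ y * φ u := by
  have h := aux_J2 φ hj (u + v) y
  have e : (u + v) * y * (u + v) = u * y * u + (u * y * v + v * y * u) + v * y * v := by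
    noncomm_ring
  rw [e, map_add, map_add, map_add, aux_J2 φ hj u y, aux_J2 φ hj v y, map_add φ u v] at h
  rw [map_add]
  have h2 : φ (u * y * v) + φ (v * y * u)
      = (φ u + φ v) * φ y * (φ u + φ v) - φ u * φ y * φ u - φ v * φ y * φ v := by
    rw [← h]; abel
  rw [h2]; noncomm_ring

/-- The diagonal Jacobson–Rickart identity. -/
private lemma aux_diagH (φ : R →ₗ[ℂ] A)
    (hj : ∀ a b, φ (a * b + b * a) = φ a * φ b + φ b * φ a) (a b m : R) :
    (φ (a*b) - φ a * φ b) * φ m * (φ (a*b) - φ b * φ a)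
      + (φ (a*b) - φ b * φ a) * φ m * (φ (a*b) - φ a * φ b) = 0 := by
  have hpq : (φ (a*b) + φ (b*a)) - (φ a * φ b + φ b * φ a) = 0 := by
    rw [sub_eq_zero, ← map_add]; exact hj a b
  have hR1 : (φ (a*b) * φ m * φ (b*a) + φ (b*a) * φ m * φ (a*b))
      - (φ a * φ b * φ m * (φ b * φ a) + φ b * φ a * φ m * (φ a * φ b)) = 0 := by
    rw [sub_eq_zero]
    have h := aux_J3 φ hj (a*b) m (b*a)
    have e : a * b * m * (b * a) + b * a * m * (a * b)
        = a * (b * m * b) * a + b * (a * m * a) * b := by noncomm_ring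
    rw [e, map_add, aux_J2 φ hj a (b*m*b), aux_J2 φ hj b (a*m*a),
        aux_J2 φ hj b m, aux_J2 φ hj a m] at h
    rw [← h]; noncomm_ring
  have main : (φ (a*b) - φ a * φ b) * φ m * (φ (a*b) - φ b * φ a)
      + (φ (a*b) - φ b * φ a) * φ m * (φ (a*b) - φ a * φ b)
      = -((φ (a*b) * φ m * φ (b*a) + φ (b*a) * φ m * φ (a*b))
          - (φ a * φ b * φ m * (φ b * φ a) + φ b * φ a * φ m * (φ a * φ b)))
        + φ (a*b) * φ m * ((φ (a*b) + φ (b*a)) - (φ a * φ b + φ b * φ a))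
        + ((φ (a*b) + φ (b*a)) - (φ a * φ b + φ b * φ a)) * φ m * φ (a*b) := by
    noncomm_ring
  rw [hpq, hR1] at main
  simpa using main

/-- Brešar: with semiprimeness, `u x v + v x u = 0` for all `x` implies `u x v = 0`. -/
private lemma aux_anti {A : Type*} [Ring A] [Algebra ℂ A]
    (hsp : ∀ w : A, (∀ y : A, w * y * w = 0) → w = 0)
    (u v : A) (hu : ∀ y : A, u * y * v + v * y * u = 0) (x : A) : u * x * v = 0 := by
  have hneg : ∀ z : A, v * z * u = -(u * z * v) := fun z =>
    eq_neg_of_add_eq_zero_right (hu z)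
  apply hsp
  intro y
  have hA : (u*x*u) * y * (v*x*v) = (u*x*v) * y * (u*x*v) := by
    have h1 : u * (x*u*y) * v = -(v * (x*u*y) * u) := eq_neg_of_add_eq_zero_left (hu (x*u*y))
    have h2 : v * x * u = -(u * x * v) := hneg x
    calc (u*x*u) * y * (v*x*v) = (u * (x*u*y) * v) * (x*v) := by noncomm_ring
      _ = (-(v * (x*u*y) * u)) * (x*v) := by rw [h1]
      _ = -((v*x*u) * (y * (u * (x*v)))) := by noncomm_ring
      _ = -((-(u*x*v)) * (y * (u * (x*v)))) := by rw [h2]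
      _ = (u*x*v) * y * (u*x*v) := by noncomm_ring
  have hB : (u*x*u) * y * (v*x*v) = -((u*x*v) * y * (u*x*v)) := by
    have h3 : u * (x*u*y*v*x) * v = -(v * (x*u*y*v*x) * u) :=
      eq_neg_of_add_eq_zero_left (hu (x*u*y*v*x))
    have h2 : v * x * u = -(u * x * v) := hneg x
    calc (u*x*u) * y * (v*x*v) = u * (x*u*y*v*x) * v := by noncomm_ring
      _ = -(v * (x*u*y*v*x) * u) := h3
      _ = -((v*x*u) * y * (v*x*u)) := by noncomm_ring
      _ = -((-(u*x*v)) * y * (-(u*x*v))) := by rw [h2]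
      _ = -((u*x*v) * y * (u*x*v)) := by noncomm_ring
  exact aux_zero_of_self (eq_neg_iff_add_eq_zero.mp (hA.symm.trans hB))

private def auxS (φ : R →ₗ[ℂ] A) (a b : R) : A := φ (a*b) - φ a * φ b
private def auxT (φ : R →ₗ[ℂ] A) (a b : R) : A := φ (a*b) - φ b * φ a

private lemma auxS_add1 (φ : R →ₗ[ℂ] A) (a c b : R) :
    auxS φ (a + c) b = auxS φ a b + auxS φ c b := by
  simp only [auxS, add_mul, map_add]; noncomm_ring
private lemma auxS_add2 (φ : R →ₗ[ℂ] A) (a b d : R) :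
    auxS φ a (b + d) = auxS φ a b + auxS φ a d := by
  simp only [auxS, mul_add, map_add]; noncomm_ring
private lemma auxT_add1 (φ : R →ₗ[ℂ] A) (a c b : R) :
    auxT φ (a + c) b = auxT φ a b + auxT φ c b := by
  simp only [auxT, add_mul, map_add]; noncomm_ring
private lemma auxT_add2 (φ : R →ₗ[ℂ] A) (a b d : R) :
    auxT φ a (b + d) = auxT φ a b + auxT φ a d := by
  simp only [auxT, mul_add, map_add]; noncomm_ring

variable (φ : R →ₗ[ℂ] A) (hsurj : Function.Surjective φ)
  (hsp : ∀ w : A, (∀ y : A, w * y * w = 0) → w = 0)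
  (hj : ∀ a b, φ (a * b + b * a) = φ a * φ b + φ b * φ a)

include hsurj hsp hj

private lemma aux_sxt (a b : R) (x : A) : auxS φ a b * x * auxT φ a b = 0 := by
  apply aux_anti hsp
  intro y
  obtain ⟨m, rfl⟩ := hsurj y
  exact aux_diagH φ hj a b m

private lemma aux_txs (a b : R) (x : A) : auxT φ a b * x * auxS φ a b = 0 := by
  apply aux_anti hsp
  intro y
  obtain ⟨m, rfl⟩ := hsurj y
  have := aux_diagH φ hj a b m
  rw [add_comm] at this
  exact this

private lemma aux_L3 (a c b : R) (x : A) : auxS φ a b * x * auxT φ c b = 0 := by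
  have cross2 : ∀ y : A, auxT φ c b * y * auxS φ a b = -(auxT φ a b * y * auxS φ c b) := by
    intro y
    have h := aux_txs φ hsurj hsp hj (a + c) b y
    rw [auxT_add1, auxS_add1] at h
    have e : (auxT φ a b + auxT φ c b) * y * (auxS φ a b + auxS φ c b)
        = (auxT φ a b * y * auxS φ a b + auxT φ c b * y * auxS φ c b)
          + (auxT φ a b * y * auxS φ c b + auxT φ c b * y * auxS φ a b) := by noncomm_ring
    rw [e, aux_txs φ hsurj hsp hj a b y, aux_txs φ hsurj hsp hj c b y] at h
    simp only [add_zero, zero_add] at h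
    exact eq_neg_of_add_eq_zero_right h
  apply hsp
  intro y
  calc auxS φ a b * x * auxT φ c b * y * (auxS φ a b * x * auxT φ c b)
      = (auxS φ a b * x) * (auxT φ c b * y * auxS φ a b) * (x * auxT φ c b) := by noncomm_ring
    _ = (auxS φ a b * x) * (-(auxT φ a b * y * auxS φ c b)) * (x * auxT φ c b) := by
        rw [cross2 y]
    _ = -((auxS φ a b * x * auxT φ a b) * (y * (auxS φ c b * x * auxT φ c b))) := by
        noncomm_ring
    _ = 0 := by rw [aux_sxt φ hsurj hsp hj a b x]; simp

private lemma aux_L4 (a c b : R) (x : A) : auxT φ c b * x * auxS φ a b = 0 := by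
  apply hsp
  intro y
  calc auxT φ c b * x * auxS φ a b * y * (auxT φ c b * x * auxS φ a b)
      = (auxT φ c b * x) * (auxS φ a b * y * auxT φ c b) * (x * auxS φ a b) := by noncomm_ring
    _ = 0 := by rw [aux_L3 φ hsurj hsp hj a c b y]; simp

private lemma aux_L5 (a b c d : R) (x : A) : auxS φ a b * x * auxT φ c d = 0 := by
  have cross4 : ∀ y : A, auxT φ c d * y * auxS φ a b = -(auxT φ c b * y * auxS φ a d) := by
    intro y
    have h := aux_L4 φ hsurj hsp hj a c (b + d) y
    rw [auxT_add2, auxS_add2] at h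
    have e : (auxT φ c b + auxT φ c d) * y * (auxS φ a b + auxS φ a d)
        = (auxT φ c b * y * auxS φ a b + auxT φ c d * y * auxS φ a d)
          + (auxT φ c b * y * auxS φ a d + auxT φ c d * y * auxS φ a b) := by noncomm_ring
    rw [e, aux_L4 φ hsurj hsp hj a c b y, aux_L4 φ hsurj hsp hj a c d y] at h
    simp only [add_zero, zero_add] at h
    exact eq_neg_of_add_eq_zero_right h
  apply hsp
  intro y
  calc auxS φ a b * x * auxT φ c d * y * (auxS φ a b * x * auxT φ c d)
      = (auxS φ a b * x) * (auxT φ c d * y * auxS φ a b) * (x * auxT φ c d) := by noncomm_ring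
    _ = (auxS φ a b * x) * (-(auxT φ c b * y * auxS φ a d)) * (x * auxT φ c d) := by
        rw [cross4 y]
    _ = -((auxS φ a b * x * auxT φ c b) * (y * (auxS φ a d * x * auxT φ c d))) := by
        noncomm_ring
    _ = 0 := by rw [aux_L3 φ hsurj hsp hj a c b x]; simp

private lemma aux_L6 (a b c d : R) (x : A) : auxT φ c d * x * auxS φ a b = 0 := by
  apply hsp
  intro y
  calc auxT φ c d * x * auxS φ a b * y * (auxT φ c d * x * auxS φ a b)
      = (auxT φ c d * x) * (auxS φ a b * y * auxT φ c d) * (x * auxS φ a b) := by noncomm_ring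
    _ = 0 := by rw [aux_L5 φ hsurj hsp hj a b c d y]; simp

end KadisonAux


/-- Existence of a central projection in a von Neumann algebra `M` adapted to a family `G`
of operators in `M`: `p` fixes (on the right) every `g ∈ G`, and `T * p = 0` for any `T`
annihilating `M * G`. -/
private lemma aux_proj {H : Type*} [NormedAddCommGroup H] [InnerProductSpace ℂ H]
    [CompleteSpace H] (M : VonNeumannAlgebra H) (G : Set (H →L[ℂ] H))
    (hG : ∀ g ∈ G, g ∈ M) :
    ∃ p : M.toStarSubalgebra,
      star p = p ∧ p * p = p ∧ (∀ y : M.toStarSubalgebra, y * p = p * y) ∧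
      (∀ g ∈ G, g * (p : H →L[ℂ] H) = g) ∧
      (∀ T : H →L[ℂ] H, (∀ g ∈ G, ∀ y ∈ (M : Set (H →L[ℂ] H)), T * (y * g) = 0) →
        T * (p : H →L[ℂ] H) = 0) := by
  classical
  set Gv : Set H := {z | ∃ y ∈ (M : Set (H →L[ℂ] H)), ∃ g ∈ G, ∃ ξ : H, (y * g) ξ = z} with hGv
  set K₀ : Submodule ℂ H := Submodule.span ℂ Gv with hK₀
  set K : Submodule ℂ H := K₀.topologicalClosure with hK
  have hK₀K : K₀ ≤ K := K₀.le_topologicalClosure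
  have hgen : ∀ y ∈ (M : Set (H →L[ℂ] H)), ∀ g ∈ G, ∀ ξ : H, (y * g) ξ ∈ K₀ :=
    fun y hy g hg ξ => Submodule.subset_span ⟨y, hy, g, hg, ξ, rfl⟩
  -- invariance of K under any operator commuting with everything in M, and under M itself
  have hK₀inv : ∀ y ∈ (M : Set (H →L[ℂ] H)), ∀ v ∈ K₀, y v ∈ K₀ := by
    intro y hy v hv
    have hle : K₀ ≤ Submodule.comap (y : H →ₗ[ℂ] H) K₀ := by
      apply Submodule.span_le.mpr
      rintro z ⟨y', hy', g, hg, ξ, rfl⟩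
      simp only [SetLike.mem_coe, Submodule.mem_comap, ContinuousLinearMap.coe_coe]
      have : y ((y' * g) ξ) = ((y * y') * g) ξ := by
        simp only [ContinuousLinearMap.mul_apply, mul_assoc]
      rw [this]
      exact hgen _ (mul_mem hy hy') _ hg _
    exact hle hv
  have hclos : ∀ (f : H →L[ℂ] H), (∀ v ∈ K₀, f v ∈ K₀) → ∀ v ∈ K, f v ∈ K := by
    intro f hf v hv
    have hv' : v ∈ closure (K₀ : Set H) := by
      rw [← Submodule.topologicalClosure_coe]; exact hv
    have h2 := map_mem_closure f.continuous hv' hf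
    rw [← Submodule.topologicalClosure_coe] at h2
    exact h2
  have hKinv : ∀ y ∈ (M : Set (H →L[ℂ] H)), ∀ v ∈ K, y v ∈ K :=
    fun y hy => hclos y (hK₀inv y hy)
  have hKinv' : ∀ g' ∈ Set.centralizer (M : Set (H →L[ℂ] H)), ∀ v ∈ K, g' v ∈ K := by
    intro g' hg' v hv
    refine hclos g' ?_ v hv
    intro w hw
    have hle : K₀ ≤ Submodule.comap (g' : H →ₗ[ℂ] H) K₀ := by
      apply Submodule.span_le.mpr
      rintro z ⟨y', hy', g, hg, ξ, rfl⟩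
      simp only [SetLike.mem_coe, Submodule.mem_comap, ContinuousLinearMap.coe_coe]
      have hmem : y' * g ∈ (M : Set (H →L[ℂ] H)) := mul_mem hy' (hG g hg)
      have hcm := hg' _ hmem
      have : g' ((y' * g) ξ) = (y' * g) (g' ξ) := by
        have h3 := congrFun (congrArg DFunLike.coe hcm) ξ
        simpa only [ContinuousLinearMap.mul_apply] using h3.symm
      rw [this]
      exact hgen _ hy' _ hg _
    exact hle hw
  -- the orthogonal projection
  set P : H →L[ℂ] H := K.subtypeL ∘L K.orthogonalProjectionOnto with hP
  have hPsa : IsSelfAdjoint P := isSelfAdjoint_starProjection K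
  have hPmemK : ∀ v, P v ∈ K := fun v => SetLike.coe_mem _
  have hPfix : ∀ v ∈ K, P v = v := by
    intro v hv
    have h4 := Submodule.orthogonalProjectionOnto_mem_subspace_eq_self (K := K) ⟨v, hv⟩
    calc P v = (K.orthogonalProjectionOnto v : H) := rfl
      _ = v := by rw [h4]
  have hPP : P * P = P := by
    ext v
    simp only [ContinuousLinearMap.mul_apply]
    exact hPfix _ (hPmemK v)
  have hcommP : ∀ T : H →L[ℂ] H, (∀ v ∈ K, T v ∈ K) → (∀ v ∈ K, star T v ∈ K) →
      T * P = P * T := by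
    intro T hT hTs
    have h1 : ∀ (S : H →L[ℂ] H), (∀ v ∈ K, S v ∈ K) → P * (S * P) = S * P := by
      intro S hS
      ext v
      simp only [ContinuousLinearMap.mul_apply]
      exact hPfix _ (hS _ (hPmemK v))
    have e1 : P * (T * P) = T * P := h1 T hT
    have e2 : P * (star T * P) = star T * P := h1 _ hTs
    have e3 := congrArg star e2
    rw [star_mul, star_mul, star_star, hPsa.star_eq] at e3
    calc T * P = P * (T * P) := e1.symm
      _ = P * T * P := by rw [mul_assoc]
      _ = P * T := e3
  have hPinM : P ∈ (M : Set (H →L[ℂ] H)) := by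
    rw [← M.centralizer_centralizer]
    intro g' hg'
    have hgstar : star g' ∈ Set.centralizer (M : Set (H →L[ℂ] H)) := by
      intro m hm
      have h1 : star m ∈ (M : Set (H →L[ℂ] H)) := star_mem hm
      have h2 := hg' (star m) h1
      calc m * star g' = star (g' * star m) := by rw [star_mul, star_star]
        _ = star (star m * g') := by rw [h2]
        _ = star g' * m := by rw [star_mul, star_star]
    exact hcommP g' (hKinv' g' hg') (hKinv' (star g') hgstar)
  refine ⟨⟨P, hPinM⟩, Subtype.ext hPsa.star_eq, Subtype.ext hPP, ?_, ?_, ?_⟩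
  · intro y
    apply Subtype.ext
    show (y : H →L[ℂ] H) * P = P * (y : H →L[ℂ] H)
    apply hcommP
    · exact hKinv _ (SetLike.coe_mem y)
    · intro v hv
      have : star ((y : H →L[ℂ] H)) ∈ (M : Set (H →L[ℂ] H)) := star_mem (SetLike.coe_mem y)
      exact hKinv _ this v hv
  · intro g hg
    have hgK : ∀ v, g v ∈ K := by
      intro v
      apply hK₀K
      have h5 : g v = ((1 : H →L[ℂ] H) * g) v := by simp
      rw [h5]
      exact hgen _ (one_mem M) _ hg _
    have hPg : P * g = g := by
      ext v
      simp only [ContinuousLinearMap.mul_apply]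
      exact hPfix _ (hgK v)
    have hgM : g ∈ (M : Set (H →L[ℂ] H)) := hG g hg
    have : g * P = P * g := hcommP g (hKinv g hgM) (hKinv (star g) (star_mem hgM))
    rw [this, hPg]
  · intro T hT
    have hker : K ≤ LinearMap.ker (T : H →ₗ[ℂ] H) := by
      apply Submodule.topologicalClosure_minimal
      · apply Submodule.span_le.mpr
        rintro z ⟨y', hy', g, hg, ξ, rfl⟩
        simp only [SetLike.mem_coe, LinearMap.mem_ker, ContinuousLinearMap.coe_coe]
        have h6 := hT g hg y' hy'
        have : T ((y' * g) ξ) = (T * (y' * g)) ξ := by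
          simp only [ContinuousLinearMap.mul_apply]
        rw [this, h6]
        simp
      · exact ContinuousLinearMap.isClosed_ker _
    ext v
    simp only [ContinuousLinearMap.mul_apply, ContinuousLinearMap.zero_apply]
    exact hker (hPmemK v)

/-- (Kadison decomposition.) For any Jordan *-isomorphism `φ` of a von Neumann algebra
`M₁` onto a von Neumann algebra `M₂` there is a central projection `E ∈ M₁` such that
`F := φ(E)` is a central projection of `M₂`, `φ` is multiplicative in the corner cut by
`F` and antimultiplicative in the corner cut by `1 − F`. -/
theorem stmt16 {H₁ H₂ : Type*}
    [NormedAddCommGroup H₁] [InnerProductSpace ℂ H₁] [CompleteSpace H₁]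
    [NormedAddCommGroup H₂] [InnerProductSpace ℂ H₂] [CompleteSpace H₂]
    (M₁ : VonNeumannAlgebra H₁) (M₂ : VonNeumannAlgebra H₂)
    (φ : M₁.toStarSubalgebra →ₗ[ℂ] M₂.toStarSubalgebra)
    (hbij : Function.Bijective φ)
    (hstar : ∀ a, φ (star a) = star (φ a))
    (hjordan : ∀ a b, φ (a * b + b * a) = φ a * φ b + φ b * φ a) :
    ∃ E : M₁.toStarSubalgebra,
      star E = E ∧ E * E = E ∧ (∀ A : M₁.toStarSubalgebra, E * A = A * E) ∧
      star (φ E) = φ E ∧ φ E * φ E = φ E ∧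
      (∀ B : M₂.toStarSubalgebra, φ E * B = B * φ E) ∧
      (∀ A B : M₁.toStarSubalgebra,
        φ (A * B) * φ E = (φ A * φ B) * φ E ∧
        φ (A * B) * (1 - φ E) = (φ B * φ A) * (1 - φ E)) := by
  classical
  obtain ⟨hinj, hsurj⟩ := hbij
  -- semiprimeness of M₂
  have hsp : ∀ w : M₂.toStarSubalgebra,
      (∀ y : M₂.toStarSubalgebra, w * y * w = 0) → w = 0 := by
    intro w h
    have h1 : w * star w * w = 0 := h (star w)
    have hc : ((w : H₂ →L[ℂ] H₂) * star (w : H₂ →L[ℂ] H₂))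
        * ((w : H₂ →L[ℂ] H₂) * star (w : H₂ →L[ℂ] H₂)) = 0 := by
      have hv := congrArg (Subtype.val) h1
      push_cast [StarMemClass.coe_star] at hv
      calc ((w : H₂ →L[ℂ] H₂) * star (w : H₂ →L[ℂ] H₂))
            * ((w : H₂ →L[ℂ] H₂) * star (w : H₂ →L[ℂ] H₂))
          = ((w : H₂ →L[ℂ] H₂) * star (w : H₂ →L[ℂ] H₂) * (w : H₂ →L[ℂ] H₂))
            * star (w : H₂ →L[ℂ] H₂) := by noncomm_ring
        _ = 0 := by rw [hv]; simp
    set W : H₂ →L[ℂ] H₂ := (w : H₂ →L[ℂ] H₂) with hW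
    have hsa : star (W * star W) = W * star W := by rw [star_mul, star_star]
    have hz : W * star W = 0 := by
      have hn : ‖W * star W‖ * ‖W * star W‖ = 0 := by
        rw [← CStarRing.norm_star_mul_self (x := W * star W), hsa, hc, norm_zero]
      have : ‖W * star W‖ = 0 := by nlinarith [norm_nonneg (W * star W)]
      exact norm_eq_zero.mp this
    have hWz : W = 0 := by
      have hn : ‖W‖ * ‖W‖ = 0 := by
        rw [← CStarRing.norm_self_mul_star (x := W), hz, norm_zero]
      have : ‖W‖ = 0 := by nlinarith [norm_nonneg W]
      exact norm_eq_zero.mp this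
    exact Subtype.ext hWz
  -- the central projection adapted to the multiplicativity defects
  obtain ⟨Pel, hPelstar, hPelPel, hPelcomm, hPS, hPT⟩ :=
    aux_proj M₂
      {g | ∃ a b : M₁.toStarSubalgebra,
        g = ((auxS φ a b : M₂.toStarSubalgebra) : H₂ →L[ℂ] H₂)}
      (by rintro g ⟨a, b, rfl⟩; exact SetLike.coe_mem _)
  -- S * Pel = S
  have hSP : ∀ a b : M₁.toStarSubalgebra, auxS φ a b * Pel = auxS φ a b := by
    intro a b
    apply Subtype.ext
    push_cast
    exact hPS _ ⟨a, b, rfl⟩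
  -- T * Pel = 0
  have hTP : ∀ a b : M₁.toStarSubalgebra, auxT φ a b * Pel = 0 := by
    intro a b
    apply Subtype.ext
    push_cast
    apply hPT
    rintro g ⟨a', b', rfl⟩ y hy
    have h6 : auxT φ a b * (⟨y, hy⟩ * auxS φ a' b') = 0 := by
      have h7 := aux_L6 φ hsurj hsp hjordan a' b' a b ⟨y, hy⟩
      rwa [mul_assoc] at h7
    have h8 : ((auxT φ a b * (⟨y, hy⟩ * auxS φ a' b') : M₂.toStarSubalgebra) : H₂ →L[ℂ] H₂)
        = ((auxT φ a b : M₂.toStarSubalgebra) : H₂ →L[ℂ] H₂)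
          * (y * ((auxS φ a' b' : M₂.toStarSubalgebra) : H₂ →L[ℂ] H₂)) := by
      push_cast
      rfl
    rw [← h8, h6]
    exact ZeroMemClass.coe_zero _
  -- choose E
  obtain ⟨E, hE⟩ := hsurj (1 - Pel)
  have hone : (1 : M₂.toStarSubalgebra) - φ E = Pel := by rw [hE, sub_sub_cancel]
  -- main multiplicative relations
  have main : ∀ A B : M₁.toStarSubalgebra,
      φ (A * B) * φ E = (φ A * φ B) * φ E ∧
      φ (A * B) * (1 - φ E) = (φ B * φ A) * (1 - φ E) := by
    intro A B
    constructor
    · rw [hE]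
      have h2 : auxS φ A B * (1 - Pel) = 0 := by
        rw [mul_sub, mul_one, hSP A B, sub_self]
      have h3 : (φ (A*B) - φ A * φ B) * (1 - Pel) = 0 := h2
      exact sub_eq_zero.mp (by rw [← sub_mul]; exact h3)
    · rw [hone]
      have h3 : (φ (A*B) - φ B * φ A) * Pel = 0 := hTP A B
      exact sub_eq_zero.mp (by rw [← sub_mul]; exact h3)
  -- properties of F = φ E
  have hFstar : star (φ E) = φ E := by
    rw [hE, star_sub, star_one, hPelstar]
  have hFF : φ E * φ E = φ E := by
    rw [hE]
    have expand : ((1 : M₂.toStarSubalgebra) - Pel) * (1 - Pel)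
        = 1 - Pel - Pel + Pel * Pel := by noncomm_ring
    rw [expand, hPelPel]
    abel
  have hFcent : ∀ B : M₂.toStarSubalgebra, φ E * B = B * φ E := by
    intro B
    rw [hE, sub_mul, mul_sub, one_mul, mul_one, hPelcomm B]
  -- properties of E
  have hEstar : star E = E := by
    apply hinj
    rw [hstar, hFstar]
  have hEE : E * E = E := by
    apply hinj
    have h2 : φ (E * E + E * E) = φ E + φ E := by rw [hjordan E E, hFF]
    rw [map_add] at h2
    exact aux_half h2
  have hsplitF : ∀ C : M₂.toStarSubalgebra, C = C * φ E + C * (1 - φ E) := by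
    intro C
    rw [mul_sub, mul_one]
    abel
  have hcornerF : ∀ C : M₂.toStarSubalgebra, (C * φ E) * φ E = C * φ E := by
    intro C
    rw [mul_assoc, hFF]
  have hEA : ∀ A : M₁.toStarSubalgebra, E * A = A * E := by
    intro A
    apply hinj
    have h1 : φ (E * A) = φ A * φ E := by
      obtain ⟨m1, m2⟩ := main E A
      calc φ (E * A) = φ (E * A) * φ E + φ (E * A) * (1 - φ E) := hsplitF _
        _ = (φ E * φ A) * φ E + (φ A * φ E) * (1 - φ E) := by rw [m1, m2]
        _ = (φ A * φ E) * φ E + (φ A * φ E) * (1 - φ E) := by rw [hFcent (φ A)]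
        _ = φ A * φ E := by
            rw [hcornerF (φ A), mul_sub, mul_one, hcornerF (φ A)]
            abel
    have h2 : φ (A * E) = φ A * φ E := by
      obtain ⟨m1, m2⟩ := main A E
      calc φ (A * E) = φ (A * E) * φ E + φ (A * E) * (1 - φ E) := hsplitF _
        _ = (φ A * φ E) * φ E + (φ E * φ A) * (1 - φ E) := by rw [m1, m2]
        _ = (φ A * φ E) * φ E + (φ A * φ E) * (1 - φ E) := by rw [hFcent (φ A)]
        _ = φ A * φ E := by
            rw [hcornerF (φ A), mul_sub, mul_one, hcornerF (φ A)]
            abel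
    rw [h1, h2]
  exact ⟨E, hEstar, hEE, hEA, hFstar, hFF, hFcent, main⟩
end

section
/- Let A and B be unital C*-algebras and let φ : A → B be a linear map such that ω ∘ φ is a pure state of A for every pure state ω of B. Then φ(1) = 1, φ(a*) = φ(a)* for all a ∈ A, φ(a) is positive whenever a ∈ A is positive, and ‖φ(a)‖ ≤ ‖a‖ for every self-adjoint a ∈ A. -/
namespace Stmt17Aux

open Complex ComplexStarModule

variable {B : Type*} [CStarAlgebra B]

lemma state_norm_apply_le {ω : B →L[ℂ] ℂ} (hω : IsState ω) (x : B) : ‖ω x‖ ≤ ‖x‖ := by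
  calc ‖ω x‖ ≤ ‖ω‖ * ‖x‖ := ω.le_opNorm x
  _ = ‖x‖ := by rw [hω.2, one_mul]

lemma state_nontrivial {ω : B →L[ℂ] ℂ} (hω : IsState ω) : Nontrivial B := by
  by_contra h
  have : Subsingleton B := not_nontrivial_iff_subsingleton.mp h
  have : ω = 0 := by ext x; rw [Subsingleton.elim x (0 : B)]; simp
  rw [this] at hω
  simpa using hω.2

lemma state_im_eq_zero {ω : B →L[ℂ] ℂ} (hω : IsState ω) {a : B} (ha : IsSelfAdjoint a) :
    (ω a).im = 0 := by
  have : Nontrivial B := state_nontrivial hω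
  have key : ∀ t : ℝ, ((ω a).im + t) ^ 2 ≤ ‖a‖ ^ 2 + t ^ 2 := by
    intro t
    set w : ℂ := (t : ℂ) * I with hw
    have hcw : star w = -w := by
      simp [hw, Complex.ext_iff]
    have hww : w * w = -((t : ℂ) ^ 2) := by
      have : w * w = (t : ℂ) ^ 2 * I ^ 2 := by rw [hw]; ring
      rw [this, Complex.I_sq]; ring
    set u : B := a + w • 1 with hu
    have hstar : star u = a - w • 1 := by
      rw [hu, star_add, ha.star_eq, star_smul, star_one, hcw, neg_smul, ← sub_eq_add_neg]
    have hmul : star u * u = a * a + ((t : ℂ) ^ 2) • 1 := by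
      rw [hstar, hu]
      simp only [sub_mul, mul_add, mul_sub, smul_mul_assoc, mul_smul_comm, mul_one, one_mul,
        smul_smul, smul_sub]
      rw [hww, neg_smul]
      abel
    have hnorm_u_sq : ‖u‖ ^ 2 ≤ ‖a‖ ^ 2 + t ^ 2 := by
      have h1 : ‖u‖ ^ 2 = ‖star u * u‖ := by
        rw [CStarRing.norm_star_mul_self, sq]
      rw [h1, hmul]
      calc ‖a * a + ((t : ℂ) ^ 2) • 1‖ ≤ ‖a * a‖ + ‖((t : ℂ) ^ 2) • (1 : B)‖ := norm_add_le _ _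
        _ ≤ ‖a‖ * ‖a‖ + ‖((t : ℂ) ^ 2)‖ * ‖(1 : B)‖ := by
            gcongr
            · exact norm_mul_le a a
            · rw [norm_smul]
        _ = ‖a‖ ^ 2 + t ^ 2 := by
            rw [norm_one, mul_one, norm_pow, Complex.norm_real, Real.norm_eq_abs, _root_.sq_abs, ← sq]
    have hval : ω u = ω a + w := by
      rw [hu, map_add, map_smul, hω.1, smul_eq_mul, mul_one]
    have h2 : ((ω a).im + t) ^ 2 ≤ ‖ω u‖ ^ 2 := by
      rw [hval]
      have h3 : ‖ω a + w‖ ^ 2 = ((ω a).re) ^ 2 + ((ω a).im + t) ^ 2 := by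
        rw [Complex.sq_norm, Complex.normSq_apply]
        simp [hw]
        ring
      rw [h3]
      nlinarith [sq_nonneg ((ω a).re)]
    calc ((ω a).im + t) ^ 2 ≤ ‖ω u‖ ^ 2 := h2
      _ ≤ ‖u‖ ^ 2 := by gcongr; exact state_norm_apply_le hω u
      _ ≤ ‖a‖ ^ 2 + t ^ 2 := hnorm_u_sq
  set β := (ω a).im with hβ
  by_contra hne
  have h := key ((‖a‖ ^ 2 + 1) / (2 * β))
  have hb2 : 2 * β * ((‖a‖ ^ 2 + 1) / (2 * β)) = ‖a‖ ^ 2 + 1 := by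
    field_simp
  nlinarith [sq_nonneg β]

lemma state_real {ω : B →L[ℂ] ℂ} (hω : IsState ω) {a : B} (ha : IsSelfAdjoint a) :
    ω a = ((ω a).re : ℂ) := by
  have := state_im_eq_zero hω ha
  exact Complex.ext rfl (by simpa using this)

lemma state_map_star {ω : B →L[ℂ] ℂ} (hω : IsState ω) (a : B) :
    ω (star a) = starRingEnd ℂ (ω a) := by
  have hdec := realPart_add_I_smul_imaginaryPart a
  have hu : IsSelfAdjoint ((ℜ a : B)) := (ℜ a).2
  have hv : IsSelfAdjoint ((ℑ a : B)) := (ℑ a).2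
  have hstar : star a = (ℜ a : B) - I • (ℑ a : B) := by
    conv_lhs => rw [← hdec]
    rw [star_add, hu.star_eq, star_smul, hv.star_eq, Complex.star_def, Complex.conj_I, neg_smul,
      ← sub_eq_add_neg]
  have h1 : ω a = ω (ℜ a : B) + I * ω (ℑ a : B) := by
    conv_lhs => rw [← hdec]
    rw [map_add, map_smul, smul_eq_mul]
  have h2 : ω (star a) = ω (ℜ a : B) - I * ω (ℑ a : B) := by
    rw [hstar, map_sub, map_smul, smul_eq_mul]
  rw [h1, h2, map_add, map_mul, Complex.conj_I]
  rw [Complex.conj_eq_iff_im.mpr (state_im_eq_zero hω hu),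
    Complex.conj_eq_iff_im.mpr (state_im_eq_zero hω hv)]
  ring

section Order

variable [PartialOrder B] [StarOrderedRing B]

lemma state_re_nonneg {ω : B →L[ℂ] ℂ} (hω : IsState ω) {a : B} (ha : 0 ≤ a) :
    0 ≤ (ω a).re := by
  have : Nontrivial B := state_nontrivial hω
  have hsa : IsSelfAdjoint a := .of_nonneg ha
  set r : ℝ := ‖a‖ with hr
  set x : B := algebraMap ℝ B r - a with hx
  have hxc : x = cfc (fun y : ℝ => r - y) a := by
    rw [cfc_sub (fun _ : ℝ => r) (fun y : ℝ => y) a, cfc_const r a hsa, cfc_id' ℝ a hsa]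
  have hxn : ‖x‖ ≤ r := by
    rw [hxc]
    refine norm_cfc_le (norm_nonneg a) fun y hy => ?_
    have h0 : 0 ≤ y := spectrum_nonneg_of_nonneg ha hy
    have h1 : ‖y‖ ≤ ‖a‖ := spectrum.norm_le_norm_of_mem hy
    rw [Real.norm_eq_abs] at h1 ⊢
    rw [_root_.abs_of_nonneg h0] at h1
    rw [_root_.abs_of_nonneg (by linarith)]
    linarith
  have hωx : ω x = (r : ℂ) - ω a := by
    rw [hx, map_sub]
    congr 1
    rw [IsScalarTower.algebraMap_apply ℝ ℂ B, Algebra.algebraMap_eq_smul_one, map_smul,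
      smul_eq_mul, hω.1, mul_one]
    rfl
  have habs : ‖ω x‖ ≤ r := le_trans (state_norm_apply_le hω x) hxn
  have hre : (ω x).re ≤ r := le_trans (Complex.re_le_norm _) habs
  rw [hωx] at hre
  simp at hre
  linarith

lemma state_re_le_sSup [Nontrivial B] {ω : B →L[ℂ] ℂ} (hω : IsState ω) {b : B}
    (hb : IsSelfAdjoint b) : (ω b).re ≤ sSup (spectrum ℝ b) := by
  set M : ℝ := sSup (spectrum ℝ b) with hM
  set x : B := algebraMap ℝ B M - b with hx
  have hxsa : IsSelfAdjoint x := by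
    refine IsSelfAdjoint.sub ?_ hb
    rw [IsSelfAdjoint, Algebra.algebraMap_eq_smul_one, star_smul, star_one, star_trivial]
  have hxnn : 0 ≤ x := by
    rw [StarOrderedRing.nonneg_iff_spectrum_nonneg (R := ℝ) x hxsa]
    intro y hy
    rw [hx, ← spectrum.singleton_sub_eq] at hy
    obtain ⟨m, hm, z, hz, rfl⟩ := hy
    rw [Set.mem_singleton_iff] at hm
    subst hm
    have : z ≤ M := le_csSup (spectrum.isCompact b).bddAbove hz
    simpa using this
  have := state_re_nonneg hω hxnn
  have hωx : ω x = (M : ℂ) - ω b := by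
    rw [hx, map_sub]
    congr 1
    rw [IsScalarTower.algebraMap_apply ℝ ℂ B, Algebra.algebraMap_eq_smul_one, map_smul,
      smul_eq_mul, hω.1, mul_one]
    rfl
  rw [hωx] at this
  simp at this
  linarith

end Order

lemma exists_isState_eq [Nontrivial B] {b : B} {l : ℝ} (hl : l ∈ spectrum ℝ b) :
    ∃ ω : B →L[ℂ] ℂ, IsState ω ∧ ω b = (l : ℂ) := by
  classical
  -- the linear map (α, β) ↦ α • 1 + β • b
  let g : ℂ × ℂ →ₗ[ℂ] B :=
    { toFun := fun p => p.1 • 1 + p.2 • b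
      map_add' := by intro p q; simp [add_smul]; abel
      map_smul' := by intro c p; simp [smul_smul, smul_add] }
  let f₀ : ℂ × ℂ →ₗ[ℂ] ℂ :=
    { toFun := fun p => p.1 + p.2 * (l : ℂ)
      map_add' := by intro p q; simp; ring
      map_smul' := by intro c p; simp; ring }
  have hlC : (l : ℂ) ∈ spectrum ℂ b := spectrum.algebraMap_mem ℂ hl
  have hspec : ∀ p : ℂ × ℂ, f₀ p ∈ spectrum ℂ (g p) := by
    rintro ⟨α, β⟩
    show α + β * (l : ℂ) ∈ spectrum ℂ (α • 1 + β • b)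
    rw [spectrum.mem_iff]
    have hkey : (algebraMap ℂ B) (α + β * (l : ℂ)) - (α • 1 + β • b)
        = β • ((algebraMap ℂ B) (l : ℂ) - b) := by
      rw [Algebra.algebraMap_eq_smul_one, Algebra.algebraMap_eq_smul_one]
      rw [add_smul, smul_sub, smul_smul]
      abel
    rw [hkey]
    by_cases hβ : β = 0
    · subst hβ
      rw [zero_smul]
      intro hunit
      exact (not_isUnit_zero : ¬IsUnit (0 : B)) hunit
    · intro hunit
      have : IsUnit ((algebraMap ℂ B) (l : ℂ) - b) := by
        have h2 : (β⁻¹ : ℂ) • (β • ((algebraMap ℂ B) (l : ℂ) - b))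
            = (algebraMap ℂ B) (l : ℂ) - b := by
          rw [smul_smul, inv_mul_cancel₀ hβ, one_smul]
        rw [← h2]
        rcases hunit with ⟨u, hu⟩
        rw [← hu]
        refine ⟨⟨β⁻¹ • (u : B), β • (↑u⁻¹ : B), ?_, ?_⟩, rfl⟩
        · rw [smul_mul_assoc, mul_smul_comm, smul_smul, inv_mul_cancel₀ hβ, one_smul,
            u.mul_inv]
        · rw [smul_mul_assoc, mul_smul_comm, smul_smul, mul_inv_cancel₀ hβ, one_smul,
            u.inv_mul]
      exact (spectrum.mem_iff.mp hlC) this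
  have hker : LinearMap.ker g ≤ LinearMap.ker f₀ := by
    intro p hp
    rw [LinearMap.mem_ker] at hp ⊢
    have := hspec p
    rw [hp, spectrum.zero_eq] at this
    exact Set.mem_singleton_iff.mp this
  set V := LinearMap.range g with hV
  let e := g.quotKerEquivRange
  let fq := (LinearMap.ker g).liftQ f₀ hker
  let f : V →ₗ[ℂ] ℂ := fq.comp e.symm.toLinearMap
  have hf : ∀ p : ℂ × ℂ, f ⟨g p, LinearMap.mem_range_self g p⟩ = f₀ p := by
    intro p
    have he : e (Submodule.Quotient.mk p) = ⟨g p, LinearMap.mem_range_self g p⟩ :=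
      Subtype.ext (g.quotKerEquivRange_apply_mk p)
    have : e.symm ⟨g p, LinearMap.mem_range_self g p⟩ = Submodule.Quotient.mk p := by
      rw [LinearEquiv.symm_apply_eq, he]
    show fq (e.symm ⟨g p, LinearMap.mem_range_self g p⟩) = f₀ p
    rw [this]
    rfl
  have hbound : ∀ v : V, ‖f v‖ ≤ 1 * ‖(v : B)‖ := by
    rintro ⟨v, hv⟩
    obtain ⟨p, rfl⟩ := hv
    rw [one_mul]
    have : (⟨g p, LinearMap.mem_range_self g p⟩ : V) = ⟨g p, ⟨p, rfl⟩⟩ := rfl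
    rw [← this, hf]
    exact spectrum.norm_le_norm_of_mem (hspec p)
  let fc : V →L[ℂ] ℂ := f.mkContinuous 1 hbound
  obtain ⟨ω, hext, hnorm⟩ := exists_extension_norm_eq V fc
  have h1mem : (1 : B) ∈ V := ⟨(1, 0), by simp [g]⟩
  have hbmem : b ∈ V := ⟨(0, 1), by simp [g]⟩
  have hω1 : ω 1 = 1 := by
    have := hext ⟨1, h1mem⟩
    rw [this]
    show f ⟨(1 : B), h1mem⟩ = 1
    have h1 : (⟨(1 : B), h1mem⟩ : V) = ⟨g (1, 0), LinearMap.mem_range_self g (1, 0)⟩ := by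
      apply Subtype.ext
      simp [g]
    rw [h1, hf]
    simp [f₀]
  have hωb : ω b = (l : ℂ) := by
    have := hext ⟨b, hbmem⟩
    rw [this]
    show f ⟨b, hbmem⟩ = (l : ℂ)
    have h1 : (⟨b, hbmem⟩ : V) = ⟨g (0, 1), LinearMap.mem_range_self g (0, 1)⟩ := by
      apply Subtype.ext
      simp [g]
    rw [h1, hf]
    simp [f₀]
  have hnle : ‖ω‖ ≤ 1 := by
    rw [hnorm]
    exact LinearMap.mkContinuous_norm_le f zero_le_one hbound
  have hnge : (1 : ℝ) ≤ ‖ω‖ := by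
    have := ω.le_opNorm 1
    rw [hω1, norm_one, norm_one, mul_one] at this
    exact this
  exact ⟨ω, ⟨hω1, le_antisymm hnle hnge⟩, hωb⟩

lemma isState_of_le {ω : B →L[ℂ] ℂ} [Nontrivial B] (h1 : ω 1 = 1) (hle : ‖ω‖ ≤ 1) :
    IsState ω := by
  refine ⟨h1, le_antisymm hle ?_⟩
  have := ω.le_opNorm 1
  rw [h1, norm_one, norm_one, mul_one] at this
  exact this

section Pure

variable [PartialOrder B] [StarOrderedRing B]

lemma exists_pure_sSup [Nontrivial B] {b : B} (hb : IsSelfAdjoint b) :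
    ∃ ω : B →L[ℂ] ℂ, IsPureState ω ∧ ω b = ((sSup (spectrum ℝ b) : ℝ) : ℂ) := by
  letI : LocallyConvexSpace ℝ (WeakDual ℂ B) := WeakBilin.locallyConvexSpace
  set M : ℝ := sSup (spectrum ℝ b) with hM
  have hMspec : M ∈ spectrum ℝ b :=
    (spectrum.isCompact b).sSup_mem hb.spectrum_nonempty
  obtain ⟨ω₀, hω₀, hω₀b⟩ := exists_isState_eq hMspec
  set S : Set (WeakDual ℂ B) := {ω : WeakDual ℂ B | IsState (WeakDual.toStrongDual ω)} with hS
  set F : Set (WeakDual ℂ B) := S ∩ {ω : WeakDual ℂ B | ω b = (M : ℂ)} with hF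
  have hSeq : S = (WeakDual.toStrongDual ⁻¹' Metric.closedBall 0 1)
      ∩ {ω : WeakDual ℂ B | ω 1 = 1} := by
    ext ω
    constructor
    · rintro ⟨h1, h2⟩
      refine ⟨?_, h1⟩
      rw [Set.mem_preimage, Metric.mem_closedBall, dist_zero_right, h2]
    · rintro ⟨h1, h2⟩
      rw [Set.mem_preimage, Metric.mem_closedBall, dist_zero_right] at h1
      exact isState_of_le h2 h1
  have hScomp : IsCompact S := by
    rw [hSeq]
    exact (WeakDual.isCompact_closedBall (0 : StrongDual ℂ B) 1).inter_right
      (isClosed_eq (WeakDual.eval_continuous (1 : B)) continuous_const)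
  have hFcomp : IsCompact F :=
    hScomp.inter_right (isClosed_eq (WeakDual.eval_continuous b) continuous_const)
  have hFne : F.Nonempty := by
    refine ⟨StrongDual.toWeakDual ω₀, ?_, ?_⟩
    · exact hω₀
    · exact hω₀b
  have hFext : IsExtreme ℝ S F := by
    refine ⟨Set.inter_subset_left, ?_⟩
    rintro x1 hx1 x2 hx2 x ⟨hxS, hxb⟩ hseg
    obtain ⟨s, t, hs, ht, hst, hsum⟩ := hseg
    have hx1state : IsState (WeakDual.toStrongDual x1) := hx1
    have hx2state : IsState (WeakDual.toStrongDual x2) := hx2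
    have hr1 : (x1 b).re ≤ M := state_re_le_sSup hx1state hb
    have hr2 : (x2 b).re ≤ M := state_re_le_sSup hx2state hb
    have hi1 : (x1 b).im = 0 := state_im_eq_zero hx1state hb
    have hi2 : (x2 b).im = 0 := state_im_eq_zero hx2state hb
    have happ : s • (x1 b) + t • (x2 b) = (M : ℂ) := by
      have : (s • x1 + t • x2) b = (M : ℂ) := by rw [hsum]; exact hxb
      exact this
    have hre : s * (x1 b).re + t * (x2 b).re = M := by
      have := congrArg Complex.re happ
      simpa [Complex.smul_re] using this
    have hMst : s * M + t * M = M := by rw [← add_mul, hst, one_mul]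
    have he1 : (x1 b).re = M := by
      by_contra hne
      have h4 : (x1 b).re < M := lt_of_le_of_ne hr1 hne
      nlinarith [mul_pos hs (sub_pos.mpr h4), mul_le_mul_of_nonneg_left hr2 ht.le, hMst]
    have he2 : (x2 b).re = M := by
      by_contra hne
      have h4 : (x2 b).re < M := lt_of_le_of_ne hr2 hne
      nlinarith [mul_pos ht (sub_pos.mpr h4), mul_le_mul_of_nonneg_left hr1 hs.le, hMst]
    · exact (⟨hx1, by show x1 b = (M : ℂ); exact Complex.ext (by simpa using he1) (by simpa using hi1)⟩ :
        x1 ∈ S ∧ x1 ∈ {ω : WeakDual ℂ B | ω b = (M : ℂ)})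
  obtain ⟨ω, hωmem⟩ := hFcomp.extremePoints_nonempty hFne
  have hωext : ω ∈ S.extremePoints ℝ := hFext.extremePoints_subset_extremePoints hωmem
  refine ⟨WeakDual.toStrongDual ω, ?_, hωmem.1.2⟩
  exact hωext

lemma exists_pure_ub [Nontrivial B] {b : B} (hb : IsSelfAdjoint b) :
    ∃ ω : B →L[ℂ] ℂ, IsPureState ω ∧ ∀ y ∈ spectrum ℝ b, y ≤ (ω b).re := by
  obtain ⟨ω, hω, hωb⟩ := exists_pure_sSup hb
  refine ⟨ω, hω, fun y hy => ?_⟩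
  rw [hωb]
  simpa using le_csSup (spectrum.isCompact b).bddAbove hy

lemma exists_pure_lb [Nontrivial B] {b : B} (hb : IsSelfAdjoint b) :
    ∃ ω : B →L[ℂ] ℂ, IsPureState ω ∧ ∀ y ∈ spectrum ℝ b, (ω b).re ≤ y := by
  obtain ⟨ω, hω, hωb⟩ := exists_pure_sSup hb.neg
  refine ⟨ω, hω, fun y hy => ?_⟩
  have hmem : -y ∈ spectrum ℝ (-b) := by
    rw [← spectrum.neg_eq]
    exact Set.neg_mem_neg.mpr hy
  have h1 : -y ≤ sSup (spectrum ℝ (-b)) := le_csSup (spectrum.isCompact (-b)).bddAbove hmem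
  have h2 : -((ω b).re) = sSup (spectrum ℝ (-b)) := by
    rw [← Complex.neg_re, ← map_neg, hωb]
    simp
  linarith

lemma selfadjoint_eq_zero [Nontrivial B] {u : B} (hu : IsSelfAdjoint u)
    (h : ∀ ω : B →L[ℂ] ℂ, IsPureState ω → ω u = 0) : u = 0 := by
  have hz : ∀ y ∈ spectrum ℝ u, y = 0 := by
    intro y hy
    obtain ⟨ω1, hω1, hub⟩ := exists_pure_ub hu
    obtain ⟨ω2, hω2, hlb⟩ := exists_pure_lb hu
    have e1 : y ≤ (ω1 u).re := hub y hy
    have e2 : (ω2 u).re ≤ y := hlb y hy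
    rw [h ω1 hω1] at e1
    rw [h ω2 hω2] at e2
    simp at e1 e2
    linarith
  rcases CStarAlgebra.norm_or_neg_norm_mem_spectrum hu with hm | hm
  · exact norm_eq_zero.mp (hz _ hm)
  · have := hz _ hm
    have : ‖u‖ = 0 := by linarith [neg_eq_zero.mp this]
    exact norm_eq_zero.mp this

lemma eq_zero_of_forall_pure [Nontrivial B] {x : B}
    (h : ∀ ω : B →L[ℂ] ℂ, IsPureState ω → ω x = 0) : x = 0 := by
  have hdec := realPart_add_I_smul_imaginaryPart x
  have hu : IsSelfAdjoint ((ℜ x : B)) := (ℜ x).2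
  have hv : IsSelfAdjoint ((ℑ x : B)) := (ℑ x).2
  have key : ∀ ω : B →L[ℂ] ℂ, IsPureState ω → ω (ℜ x : B) = 0 ∧ ω (ℑ x : B) = 0 := by
    intro ω hω
    have hstate : IsState ω := hω.1
    have h0 : ω (ℜ x : B) + I * ω (ℑ x : B) = 0 := by
      have : ω ((ℜ x : B) + I • (ℑ x : B)) = 0 := by rw [hdec]; exact h ω hω
      rwa [map_add, map_smul, smul_eq_mul] at this
    have hru := state_real hstate hu
    have hrv := state_real hstate hv
    rw [hru, hrv] at h0
    have hre := congrArg Complex.re h0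
    have him := congrArg Complex.im h0
    simp at hre him
    constructor
    · rw [hru]; simp [hre]
    · rw [hrv]; simp [him]
  have h1 : (ℜ x : B) = 0 := selfadjoint_eq_zero hu fun ω hω => (key ω hω).1
  have h2 : (ℑ x : B) = 0 := selfadjoint_eq_zero hv fun ω hω => (key ω hω).2
  rw [← hdec, h1, h2]
  simp

end Pure

end Stmt17Aux

open Stmt17Aux

/-- If `φ : A → B` is a linear map between unital C*-algebras such that `ω ∘ φ` is a
pure state of `A` for every pure state `ω` of `B`, then `φ` is unital, star-preserving,
positive, and contractive on self-adjoint elements. -/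
theorem stmt17 {A B : Type*}
    [NormedRing A] [StarRing A] [CStarRing A] [NormedAlgebra ℂ A] [CompleteSpace A]
    [StarModule ℂ A]
    [NormedRing B] [StarRing B] [CStarRing B] [NormedAlgebra ℂ B] [CompleteSpace B]
    [StarModule ℂ B]
    (φ : A →ₗ[ℂ] B)
    (hφ : ∀ ω : B →L[ℂ] ℂ, IsPureState ω →
      ∃ ρ : A →L[ℂ] ℂ, IsPureState ρ ∧ ∀ a : A, ρ a = ω (φ a)) :
    φ 1 = 1 ∧
    (∀ a : A, φ (star a) = star (φ a)) ∧
    (∀ a : A, (∃ b : A, a = star b * b) → ∃ c : B, φ a = star c * c) ∧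
    (∀ a : A, star a = a → ‖φ a‖ ≤ ‖a‖) := by
  letI : CStarAlgebra A := ⟨⟩
  letI : CStarAlgebra B := ⟨⟩
  letI : PartialOrder A := CStarAlgebra.spectralOrder A
  letI : StarOrderedRing A := CStarAlgebra.spectralOrderedRing A
  letI : PartialOrder B := CStarAlgebra.spectralOrder B
  letI : StarOrderedRing B := CStarAlgebra.spectralOrderedRing B
  rcases subsingleton_or_nontrivial B with hB | hB
  · refine ⟨Subsingleton.elim _ _, fun a => Subsingleton.elim _ _,
      fun a _ => ⟨0, Subsingleton.elim _ _⟩, fun a _ => ?_⟩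
    rw [Subsingleton.elim (φ a) 0, norm_zero]
    exact norm_nonneg a
  · have hone : φ 1 = 1 := by
      have hz : φ 1 - 1 = 0 := by
        apply eq_zero_of_forall_pure
        intro ω hω
        obtain ⟨ρ, hρ, hρφ⟩ := hφ ω hω
        have hρs : IsState ρ := hρ.1
        have hωs : IsState ω := hω.1
        rw [map_sub, ← hρφ 1, hρs.1, hωs.1, sub_self]
      exact sub_eq_zero.mp hz
    have hstar : ∀ a : A, φ (star a) = star (φ a) := by
      intro a
      have hz : φ (star a) - star (φ a) = 0 := by
        apply eq_zero_of_forall_pure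
        intro ω hω
        obtain ⟨ρ, hρ, hρφ⟩ := hφ ω hω
        rw [map_sub, ← hρφ (star a), state_map_star hρ.1 a, hρφ a,
          ← state_map_star hω.1 (φ a), sub_self]
      exact sub_eq_zero.mp hz
    refine ⟨hone, hstar, ?_, ?_⟩
    · rintro a ⟨c0, rfl⟩
      have ha : (0 : A) ≤ star c0 * c0 := star_mul_self_nonneg c0
      have hsaB : IsSelfAdjoint (φ (star c0 * c0)) := by
        rw [IsSelfAdjoint, ← hstar, star_mul, star_star]
      obtain ⟨ω, hω, hlb⟩ := exists_pure_lb hsaB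
      obtain ⟨ρ, hρ, hρφ⟩ := hφ ω hω
      have hρ0 : 0 ≤ (ρ (star c0 * c0)).re := state_re_nonneg hρ.1 ha
      have hnn : 0 ≤ φ (star c0 * c0) := by
        rw [StarOrderedRing.nonneg_iff_spectrum_nonneg (R := ℝ) _ hsaB]
        intro y hy
        calc (0 : ℝ) ≤ (ρ (star c0 * c0)).re := hρ0
          _ = (ω (φ (star c0 * c0))).re := by rw [hρφ]
          _ ≤ y := hlb y hy
      refine ⟨CFC.sqrt (φ (star c0 * c0)), ?_⟩
      rw [(IsSelfAdjoint.of_nonneg (CFC.sqrt_nonneg (φ (star c0 * c0)))).star_eq, CFC.sqrt_mul_sqrt_self _ hnn]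
    · intro a hsa
      have hsaB : IsSelfAdjoint (φ a) := by rw [IsSelfAdjoint, ← hstar, hsa]
      obtain ⟨ωu, hωu, hub⟩ := exists_pure_ub hsaB
      obtain ⟨ωl, hωl, hlb⟩ := exists_pure_lb hsaB
      obtain ⟨ρu, hρu, hρuφ⟩ := hφ ωu hωu
      obtain ⟨ρl, hρl, hρlφ⟩ := hφ ωl hωl
      have hu_le : (ωu (φ a)).re ≤ ‖a‖ := by
        have h1 : ‖ρu a‖ ≤ ‖a‖ := state_norm_apply_le hρu.1 a
        have h2 : |(ρu a).re| ≤ ‖ρu a‖ := by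
          exact Complex.abs_re_le_norm _
        calc (ωu (φ a)).re = (ρu a).re := by rw [← hρuφ]
          _ ≤ |(ρu a).re| := le_abs_self _
          _ ≤ ‖a‖ := le_trans h2 h1
      have hl_ge : -‖a‖ ≤ (ωl (φ a)).re := by
        have h1 : ‖ρl a‖ ≤ ‖a‖ := state_norm_apply_le hρl.1 a
        have h2 : |(ρl a).re| ≤ ‖ρl a‖ := by
          exact Complex.abs_re_le_norm _
        have h3 : -‖a‖ ≤ -|(ρl a).re| := by linarith [le_trans h2 h1]
        calc -‖a‖ ≤ -|(ρl a).re| := h3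
          _ ≤ (ρl a).re := neg_abs_le _
          _ = (ωl (φ a)).re := by rw [← hρlφ]
      rcases CStarAlgebra.norm_or_neg_norm_mem_spectrum hsaB with h | h
      · calc ‖φ a‖ ≤ (ωu (φ a)).re := hub _ h
          _ ≤ ‖a‖ := hu_le
      · have := hlb _ h
        linarith
end
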